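/- arXiv:nlin/0007017 — 4 statements merged into one kernel-verified Lean document; each statement's English description precedes it below -/
import Mathlib

section
/- Let n ≥ 4 be even, let β ∈ ℝ, and define H̄₄ := (β/n)·[ Σ_{0<k<l<n/2} (ω_k ω_l / 4) a_k a_l + Σ_{0<k<n/2} (ω_k²/32)(3 a_k² − b_k²) + (1/4) a_{n/2}² + (1/2) a_{n/2} Σ_{0<k<n/2} ω_k a_k + (1/8) Σ_{0<k<n/4} ω_{2k}² (d_k d_{n/2-k} − c_k c_{n/2-k}) + (1/16)(d_{n/4}² − c_{n/4}²) ], where the last term appears only if 4 divides n. Then the functions a_j (1 ≤ j ≤ n/2), b_j − b_{n/2-j} (1 ≤ j < n/4), d_{n/4} (if 4 divides n), and Q_j := ω_j² b_j² + ω_{n/2-j}² b_{n/2-j}² + 4 ω_{2j}² (c_j c_{n/2-j} − d_j d_{n/2-j}) (1 ≤ j < n/4) pairwise Poisson-commute, and each of them Poisson-commutes with H₂ + H̄₄; in particular the truncated normal form H₂ + H̄₄ of the even periodic FPU β-chain is Liouville integrable with these integrals. -/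
/-!
We work with polynomials on ℝ^{2n-2}, encoded as multivariate polynomials in the
variables `q_j, p_j` (`1 ≤ j ≤ n-1`).  The variable type is `ℕ ⊕ ℕ`, with
`Sum.inl j` standing for `q_j` and `Sum.inr j` for `p_j`; a polynomial on
ℝ^{2n-2} is one supported on the variables with index `1 ≤ j ≤ n-1`.
-/

/-- Variable type: `Sum.inl j ↔ q_j`, `Sum.inr j ↔ p_j`. -/
abbrev Var : Type := ℕ ⊕ ℕ

/-- The variables of ℝ^{2n-2}: `q_j, p_j` for `1 ≤ j ≤ n-1`. -/
def fpuVars (n : ℕ) : Set Var :=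
  {v | ∃ j, 1 ≤ j ∧ j ≤ n - 1 ∧ (v = Sum.inl j ∨ v = Sum.inr j)}

/-- The coordinate polynomial `q_j`. -/
noncomputable def qP (j : ℕ) : MvPolynomial Var ℝ := MvPolynomial.X (Sum.inl j)

/-- The coordinate polynomial `p_j`. -/
noncomputable def pP (j : ℕ) : MvPolynomial Var ℝ := MvPolynomial.X (Sum.inr j)

/-- The eigenvalues `ω_j = 2 sin(jπ/n)` of the linear periodic FPU problem. -/
noncomputable def omg (n j : ℕ) : ℝ := 2 * Real.sin (j * Real.pi / n)

/-- The Poisson bracket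
`{f, g} = Σ_{j=1}^{n-1} (∂f/∂q_j ∂g/∂p_j − ∂f/∂p_j ∂g/∂q_j)`. -/
noncomputable def pb (n : ℕ) (f g : MvPolynomial Var ℝ) : MvPolynomial Var ℝ :=
  ∑ j ∈ Finset.Icc 1 (n - 1),
    (MvPolynomial.pderiv (Sum.inl j) f * MvPolynomial.pderiv (Sum.inr j) g
      - MvPolynomial.pderiv (Sum.inr j) f * MvPolynomial.pderiv (Sum.inl j) g)

/-- The quadratic part `H₂ = Σ_{j=1}^{n-1} (p_j² + ω_j² q_j²)/2`. -/
noncomputable def H2 (n : ℕ) : MvPolynomial Var ℝ :=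
  ∑ j ∈ Finset.Icc 1 (n - 1),
    MvPolynomial.C (1 / 2 : ℝ) * (pP j ^ 2 + MvPolynomial.C (omg n j ^ 2) * qP j ^ 2)

/-- `a_j = (p_j² + p_{n-j}² + ω_j² q_j² + ω_j² q_{n-j}²)/(2ω_j)`, for `1 ≤ j < n/2`. -/
noncomputable def aP (n j : ℕ) : MvPolynomial Var ℝ :=
  MvPolynomial.C (1 / (2 * omg n j)) *
    (pP j ^ 2 + pP (n - j) ^ 2
      + MvPolynomial.C (omg n j ^ 2) * qP j ^ 2
      + MvPolynomial.C (omg n j ^ 2) * qP (n - j) ^ 2)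

/-- `b_j = p_j q_{n-j} − p_{n-j} q_j`, for `1 ≤ j < n/2`. -/
noncomputable def bP (n j : ℕ) : MvPolynomial Var ℝ :=
  pP j * qP (n - j) - pP (n - j) * qP j

/-- `c_j = (p_{n-j}² − p_j² + ω_j² q_{n-j}² − ω_j² q_j²)/(2ω_j)`, for `1 ≤ j < n/2`. -/
noncomputable def cP (n j : ℕ) : MvPolynomial Var ℝ :=
  MvPolynomial.C (1 / (2 * omg n j)) *
    (pP (n - j) ^ 2 - pP j ^ 2
      + MvPolynomial.C (omg n j ^ 2) * qP (n - j) ^ 2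
      - MvPolynomial.C (omg n j ^ 2) * qP j ^ 2)

/-- `d_j = (p_j p_{n-j} + ω_j² q_j q_{n-j})/ω_j`, for `1 ≤ j < n/2`. -/
noncomputable def dP (n j : ℕ) : MvPolynomial Var ℝ :=
  MvPolynomial.C (1 / omg n j) *
    (pP j * pP (n - j) + MvPolynomial.C (omg n j ^ 2) * qP j * qP (n - j))

/-- For even `n`, `a_{n/2} = (p_{n/2}² + ω_{n/2}² q_{n/2}²)/(2ω_{n/2})`. -/
noncomputable def aHalf (n : ℕ) : MvPolynomial Var ℝ :=
  MvPolynomial.C (1 / (2 * omg n (n / 2))) *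
    (pP (n / 2) ^ 2 + MvPolynomial.C (omg n (n / 2) ^ 2) * qP (n / 2) ^ 2)

/-- The linear substitution realizing the rotation symmetry `T`: for `1 ≤ j < n/2`
it rotates the planes `(q_j, q_{n-j})` and `(p_j, p_{n-j})` by the angle `2πj/n`,
and for even `n` it flips the signs of `q_{n/2}` and `p_{n/2}`.
`Tsub v` is the polynomial expressing the `v`-th coordinate of `T x`. -/
noncomputable def Tsub (n : ℕ) : Var → MvPolynomial Var ℝ := fun v =>
  match v with
  | Sum.inl m =>
      if 1 ≤ m ∧ 2 * m < n then
        MvPolynomial.C (Real.cos (2 * Real.pi * m / n)) * qP m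
          + MvPolynomial.C (Real.sin (2 * Real.pi * m / n)) * qP (n - m)
      else if 2 * m = n then - qP m
      else if n < 2 * m ∧ m ≤ n - 1 then
        MvPolynomial.C (-(Real.sin (2 * Real.pi * (n - m) / n))) * qP (n - m)
          + MvPolynomial.C (Real.cos (2 * Real.pi * (n - m) / n)) * qP m
      else qP m
  | Sum.inr m =>
      if 1 ≤ m ∧ 2 * m < n then
        MvPolynomial.C (Real.cos (2 * Real.pi * m / n)) * pP m
          + MvPolynomial.C (Real.sin (2 * Real.pi * m / n)) * pP (n - m)
      else if 2 * m = n then - pP m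
      else if n < 2 * m ∧ m ≤ n - 1 then
        MvPolynomial.C (-(Real.sin (2 * Real.pi * (n - m) / n))) * pP (n - m)
          + MvPolynomial.C (Real.cos (2 * Real.pi * (n - m) / n)) * pP m
      else pP m

/-- The linear substitution realizing the reflection symmetry `S`:
`q_j ↦ −q_j`, `p_j ↦ −p_j` for `1 ≤ j ≤ n/2`, the other coordinates are fixed.
`Ssub v` is the polynomial expressing the `v`-th coordinate of `S x`. -/
noncomputable def Ssub (n : ℕ) : Var → MvPolynomial Var ℝ := fun v =>
  match v with
  | Sum.inl m => if 1 ≤ m ∧ 2 * m ≤ n then - qP m else qP m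
  | Sum.inr m => if 1 ≤ m ∧ 2 * m ≤ n then - pP m else pP m

/-- `a_j` for `1 ≤ j ≤ n/2` (with even `n`): `aP n j` if `j < n/2`, `aHalf n` if `j = n/2`. -/
noncomputable def aE (n j : ℕ) : MvPolynomial Var ℝ :=
  if 2 * j = n then aHalf n else aP n j

/-- The fourth-order normal form `H̄₄` of the periodic FPU β-chain:
`H̄₄ = (β/n) [ Σ_{0<k<l<n/2} (ω_k ω_l/4) a_k a_l + Σ_{0<k<n/2} (ω_k²/32)(3a_k² − b_k²)
  + (1/4) a_{n/2}² + (1/2) a_{n/2} Σ_{0<k<n/2} ω_k a_k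
  + (1/8) Σ_{0<k<n/4} ω_{2k}² (d_k d_{n/2-k} − c_k c_{n/2-k}) + (1/16)(d_{n/4}² − c_{n/4}²) ]`,
the last term appearing only if `4 ∣ n`. -/
noncomputable def Hbar4 (n : ℕ) (β : ℝ) : MvPolynomial Var ℝ :=
  MvPolynomial.C (β / n) *
    ((∑ k ∈ (Finset.Ico 1 n).filter (fun k => 2 * k < n),
        ∑ l ∈ (Finset.Ico (k + 1) n).filter (fun l => 2 * l < n),
          MvPolynomial.C (omg n k * omg n l / 4) * (aP n k * aP n l))
      + (∑ k ∈ (Finset.Ico 1 n).filter (fun k => 2 * k < n),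
          MvPolynomial.C (omg n k ^ 2 / 32) *
            (MvPolynomial.C (3 : ℝ) * aP n k ^ 2 - bP n k ^ 2))
      + MvPolynomial.C (1 / 4 : ℝ) * aHalf n ^ 2
      + MvPolynomial.C (1 / 2 : ℝ) * aHalf n *
          (∑ k ∈ (Finset.Ico 1 n).filter (fun k => 2 * k < n),
            MvPolynomial.C (omg n k) * aP n k)
      + MvPolynomial.C (1 / 8 : ℝ) *
          (∑ k ∈ (Finset.Ico 1 n).filter (fun k => 4 * k < n),
            MvPolynomial.C (omg n (2 * k) ^ 2) *
              (dP n k * dP n (n / 2 - k) - cP n k * cP n (n / 2 - k)))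
      + (if 4 ∣ n then
          MvPolynomial.C (1 / 16 : ℝ) * (dP n (n / 4) ^ 2 - cP n (n / 4) ^ 2)
        else 0))

/-- The quartic integrals
`Q_j = ω_j² b_j² + ω_{n/2-j}² b_{n/2-j}² + 4 ω_{2j}² (c_j c_{n/2-j} − d_j d_{n/2-j})`. -/
noncomputable def QQ (n j : ℕ) : MvPolynomial Var ℝ :=
  MvPolynomial.C (omg n j ^ 2) * bP n j ^ 2
    + MvPolynomial.C (omg n (n / 2 - j) ^ 2) * bP n (n / 2 - j) ^ 2
    + MvPolynomial.C (4 * omg n (2 * j) ^ 2) *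
        (cP n j * cP n (n / 2 - j) - dP n j * dP n (n / 2 - j))

/-- The collection of integrals of the truncated normal form of the even β-chain:
`a_j` (`1 ≤ j ≤ n/2`), `b_j − b_{n/2-j}` (`1 ≤ j < n/4`), `d_{n/4}` (if `4 ∣ n`)
and `Q_j` (`1 ≤ j < n/4`). -/
noncomputable def integrals (n : ℕ) : Set (MvPolynomial Var ℝ) :=
  {g | ∃ j, 1 ≤ j ∧ 2 * j ≤ n ∧ g = aE n j}
    ∪ {g | ∃ j, 1 ≤ j ∧ 4 * j < n ∧ g = bP n j - bP n (n / 2 - j)}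
    ∪ {g | 4 ∣ n ∧ g = dP n (n / 4)}
    ∪ {g | ∃ j, 1 ≤ j ∧ 4 * j < n ∧ g = QQ n j}

/-!
STATEMENT 10: For even `n ≥ 4` and `β ∈ ℝ`, the functions `a_j` (`1 ≤ j ≤ n/2`),
`b_j − b_{n/2-j}` (`1 ≤ j < n/4`), `d_{n/4}` (if `4 ∣ n`) and `Q_j` (`1 ≤ j < n/4`)
pairwise Poisson-commute, and each of them Poisson-commutes with `H₂ + H̄₄`:
the truncated normal form of the even periodic FPU β-chain is Liouville integrable
with these integrals.
-/


/-! ### Auxiliary infrastructure -/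

section FPUProof
open MvPolynomial Finset

abbrev MP : Type := MvPolynomial Var ℝ

noncomputable def pbj (j : ℕ) (f g : MP) : MP :=
  MvPolynomial.pderiv (Sum.inl j) f * MvPolynomial.pderiv (Sum.inr j) g
    - MvPolynomial.pderiv (Sum.inr j) f * MvPolynomial.pderiv (Sum.inl j) g

lemma pb_def (n : ℕ) (f g : MP) :
    pb n f g = ∑ j ∈ Finset.Icc 1 (n - 1), pbj j f g := rfl

/-! pderiv facts for the coordinate polynomials -/

lemma pd_qq (u : ℕ) : pderiv (Sum.inl u) (qP u) = 1 := pderiv_X_self _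
lemma pd_qq' {u v : ℕ} (h : u ≠ v) : pderiv (Sum.inl v) (qP u) = 0 :=
  pderiv_X_of_ne (by simp [h])
lemma pd_qp (u v : ℕ) : pderiv (Sum.inr v) (qP u) = 0 := pderiv_X_of_ne (by simp)
lemma pd_pq (u v : ℕ) : pderiv (Sum.inl v) (pP u) = 0 := pderiv_X_of_ne (by simp)
lemma pd_pp (u : ℕ) : pderiv (Sum.inr u) (pP u) = 1 := pderiv_X_self _
lemma pd_pp' {u v : ℕ} (h : u ≠ v) : pderiv (Sum.inr v) (pP u) = 0 :=
  pderiv_X_of_ne (by simp [h])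

/-! bilinearity and Leibniz rules for `pbj` and `pb` -/

lemma pbj_self (j : ℕ) (f : MP) : pbj j f f = 0 := by
  simp [pbj, mul_comm]

lemma pbj_add_right (j : ℕ) (f g h : MP) :
    pbj j f (g + h) = pbj j f g + pbj j f h := by
  simp only [pbj, map_add]; ring

lemma pbj_sub_right (j : ℕ) (f g h : MP) :
    pbj j f (g - h) = pbj j f g - pbj j f h := by
  simp only [pbj, map_sub]; ring

lemma pbj_C_mul_right (j : ℕ) (a : ℝ) (f g : MP) :
    pbj j f (MvPolynomial.C a * g) = MvPolynomial.C a * pbj j f g := by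
  simp only [pbj, pderiv_C_mul]; ring

lemma pbj_mul_right (j : ℕ) (f g h : MP) :
    pbj j f (g * h) = pbj j f g * h + g * pbj j f h := by
  simp only [pbj, pderiv_mul]; ring

lemma pbj_antisymm (j : ℕ) (f g : MP) : pbj j f g = - pbj j g f := by
  simp only [pbj]; ring

lemma pb_self (n : ℕ) (f : MP) : pb n f f = 0 := by
  rw [pb_def]; exact Finset.sum_eq_zero fun j _ => pbj_self j f

lemma pb_antisymm (n : ℕ) (f g : MP) : pb n f g = - pb n g f := by
  rw [pb_def, pb_def, ← Finset.sum_neg_distrib]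
  exact Finset.sum_congr rfl fun j _ => pbj_antisymm j f g

lemma pb_add_right (n : ℕ) (f g h : MP) :
    pb n f (g + h) = pb n f g + pb n f h := by
  rw [pb_def, pb_def, pb_def, ← Finset.sum_add_distrib]
  exact Finset.sum_congr rfl fun j _ => pbj_add_right j f g h

lemma pb_sub_right (n : ℕ) (f g h : MP) :
    pb n f (g - h) = pb n f g - pb n f h := by
  rw [pb_def, pb_def, pb_def, ← Finset.sum_sub_distrib]
  exact Finset.sum_congr rfl fun j _ => pbj_sub_right j f g h

lemma pb_C_mul_right (n : ℕ) (a : ℝ) (f g : MP) :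
    pb n f (MvPolynomial.C a * g) = MvPolynomial.C a * pb n f g := by
  rw [pb_def, pb_def, Finset.mul_sum]
  exact Finset.sum_congr rfl fun j _ => pbj_C_mul_right j a f g

lemma pb_mul_right (n : ℕ) (f g h : MP) :
    pb n f (g * h) = pb n f g * h + g * pb n f h := by
  rw [pb_def, pb_def, pb_def, Finset.sum_mul, Finset.mul_sum, ← Finset.sum_add_distrib]
  exact Finset.sum_congr rfl fun j _ => pbj_mul_right j f g h

lemma pb_sum_right (n : ℕ) {ι : Type*} (s : Finset ι) (f : MP) (g : ι → MP) :
    pb n f (∑ i ∈ s, g i) = ∑ i ∈ s, pb n f (g i) := by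
  classical
  induction s using Finset.induction with
  | empty => simp [pb_def, pbj, Finset.sum_eq_zero]
  | insert a s hx ih =>
      rw [Finset.sum_insert hx, pb_add_right, ih, Finset.sum_insert hx]

lemma pb_zero_right (n : ℕ) (f : MP) : pb n f 0 = 0 := by
  simp [pb_def, pbj, Finset.sum_eq_zero]

lemma pb_add_left (n : ℕ) (f g h : MP) : pb n (f + g) h = pb n f h + pb n g h := by
  rw [pb_antisymm, pb_add_right, pb_antisymm n h f, pb_antisymm n h g]; ring

lemma pb_sub_left (n : ℕ) (f g h : MP) : pb n (f - g) h = pb n f h - pb n g h := by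
  rw [pb_antisymm, pb_sub_right, pb_antisymm n h f, pb_antisymm n h g]; ring

lemma pb_C_mul_left (n : ℕ) (a : ℝ) (f g : MP) :
    pb n (MvPolynomial.C a * f) g = MvPolynomial.C a * pb n f g := by
  rw [pb_antisymm, pb_C_mul_right, pb_antisymm n g f]; ring

lemma pb_mul_left (n : ℕ) (f g h : MP) :
    pb n (f * g) h = pb n f h * g + f * pb n g h := by
  rw [pb_antisymm, pb_mul_right, pb_antisymm n h f, pb_antisymm n h g]; ring

lemma pb_sq_right (n : ℕ) (f g : MP) :
    pb n f (g ^ 2) = pb n f g * g + g * pb n f g := by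
  rw [sq, pb_mul_right]

lemma pb_sq_right_zero (n : ℕ) {f g : MP} (h : pb n f g = 0) : pb n f (g ^ 2) = 0 := by
  rw [pb_sq_right, h]; ring

lemma pb_mul_right_zero (n : ℕ) {f g h : MP} (hg : pb n f g = 0) (hh : pb n f h = 0) :
    pb n f (g * h) = 0 := by
  rw [pb_mul_right, hg, hh]; ring

/-! support of polynomials -/

def PSupp (S : Finset ℕ) (f : MP) : Prop :=
  ∀ j ∉ S, pderiv (Sum.inl j) f = 0 ∧ pderiv (Sum.inr j) f = 0

lemma PSupp.add {S f g} (hf : PSupp S f) (hg : PSupp S g) : PSupp S (f + g) := by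
  intro j hj
  simp [map_add, (hf j hj).1, (hf j hj).2, (hg j hj).1, (hg j hj).2]

lemma PSupp.sub {S f g} (hf : PSupp S f) (hg : PSupp S g) : PSupp S (f - g) := by
  intro j hj
  simp [map_sub, (hf j hj).1, (hf j hj).2, (hg j hj).1, (hg j hj).2]

lemma PSupp.mul {S f g} (hf : PSupp S f) (hg : PSupp S g) : PSupp S (f * g) := by
  intro j hj
  simp [pderiv_mul, (hf j hj).1, (hf j hj).2, (hg j hj).1, (hg j hj).2]

lemma PSupp.pow {S f} (hf : PSupp S f) (k : ℕ) : PSupp S (f ^ k) := by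
  intro j hj
  simp [pderiv_pow, (hf j hj).1, (hf j hj).2]

lemma PSupp.C_mul {S f} (a : ℝ) (hf : PSupp S f) : PSupp S (MvPolynomial.C a * f) := by
  intro j hj
  simp [pderiv_C_mul, (hf j hj).1, (hf j hj).2]

lemma PSupp.q {S : Finset ℕ} {m : ℕ} (h : m ∈ S) : PSupp S (qP m) := by
  intro j hj
  constructor <;> apply pderiv_X_of_ne <;> simp
  intro hmj; exact hj (hmj ▸ h)

lemma PSupp.p {S : Finset ℕ} {m : ℕ} (h : m ∈ S) : PSupp S (pP m) := by
  intro j hj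
  constructor <;> apply pderiv_X_of_ne <;> simp
  intro hmj; exact hj (hmj ▸ h)

lemma PSupp.mono {S T f} (hf : PSupp S f) (h : S ⊆ T) : PSupp T f :=
  fun j hj => hf j (fun hjS => hj (h hjS))

lemma pb_disj {n : ℕ} {S T : Finset ℕ} {f g : MP} (hf : PSupp S f) (hg : PSupp T g)
    (hST : ∀ x ∈ S, x ∉ T) : pb n f g = 0 := by
  rw [pb_def]
  refine Finset.sum_eq_zero fun j _ => ?_
  by_cases hjS : j ∈ S
  · have := hg j (hST j hjS)
    simp [pbj, this.1, this.2]
  · have := hf j hjS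
    simp [pbj, this.1, this.2]

lemma pb_reduce_pair {n k m : ℕ} {f : MP} (hf : PSupp {k, m} f)
    (hk : k ∈ Finset.Icc 1 (n - 1)) (hm : m ∈ Finset.Icc 1 (n - 1)) (hne : k ≠ m)
    (g : MP) : pb n f g = pbj k f g + pbj m f g := by
  rw [pb_def, ← Finset.sum_pair (f := fun j => pbj j f g) hne]
  refine (Finset.sum_subset ?_ ?_).symm
  · intro x hx
    rcases Finset.mem_insert.mp hx with rfl | hx
    · exact hk
    · rw [Finset.mem_singleton.mp hx]; exact hm
  · intro j _ hj
    have := hf j (by simpa using hj)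
    simp [pbj, this.1, this.2]

lemma pb_reduce_single {n k : ℕ} {f : MP} (hf : PSupp {k} f)
    (hk : k ∈ Finset.Icc 1 (n - 1)) (g : MP) : pb n f g = pbj k f g := by
  rw [pb_def, ← Finset.sum_singleton (f := fun j => pbj j f g) k]
  refine (Finset.sum_subset ?_ ?_).symm
  · intro x hx
    rw [Finset.mem_singleton.mp hx]; exact hk
  · intro j _ hj
    have := hf j (by simpa using hj)
    simp [pbj, this.1, this.2]


/-! ### facts about the frequencies -/

lemma omg_pos {n k : ℕ} (h1 : 1 ≤ k) (h2 : k < n) : 0 < omg n k := by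
  have hn : 0 < (n : ℝ) := by exact_mod_cast (by omega : 0 < n)
  have hk : 0 < (k : ℝ) := by exact_mod_cast h1
  have hkn : (k : ℝ) < n := by exact_mod_cast h2
  have hs : 0 < Real.sin (k * Real.pi / n) := by
    apply Real.sin_pos_of_pos_of_lt_pi
    · positivity
    · rw [div_lt_iff₀ hn]
      have := Real.pi_pos
      nlinarith
  unfold omg
  linarith

lemma omg_ne {n k : ℕ} (h1 : 1 ≤ k) (h2 : k < n) : omg n k ≠ 0 :=
  ne_of_gt (omg_pos h1 h2)

lemma omg_sub {n k : ℕ} (h : k ≤ n) (hn : 0 < n) : omg n (n - k) = omg n k := by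
  unfold omg
  have hn' : (n : ℝ) ≠ 0 := Nat.cast_ne_zero.mpr (by omega)
  rw [Nat.cast_sub h]
  rw [show ((n : ℝ) - k) * Real.pi / n = Real.pi - k * Real.pi / n by field_simp]
  rw [Real.sin_pi_sub]

lemma omg_quarter {n : ℕ} (h4 : 4 ∣ n) (hn : 0 < n) : omg n (n / 4) ^ 2 = 2 := by
  obtain ⟨m, rfl⟩ := h4
  have hm : 0 < m := by omega
  have hd : 4 * m / 4 = m := by omega
  have hm' : (m : ℝ) ≠ 0 := Nat.cast_ne_zero.mpr (by omega)
  rw [hd]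
  unfold omg
  rw [show (m : ℝ) * Real.pi / (↑(4 * m)) = Real.pi / 4 by push_cast; field_simp]
  rw [Real.sin_pi_div_four]
  rw [show (2 : ℝ) * (Real.sqrt 2 / 2) = Real.sqrt 2 by ring, Real.sq_sqrt (by norm_num)]

/-! ### supports of the generators -/

lemma supp_aP (n k : ℕ) : PSupp {k, n - k} (aP n k) := by
  unfold aP
  have h1 : k ∈ ({k, n - k} : Finset ℕ) := by simp
  have h2 : n - k ∈ ({k, n - k} : Finset ℕ) := by simp
  exact PSupp.C_mul _ (((((PSupp.p h1).pow 2).add ((PSupp.p h2).pow 2)).add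
    (PSupp.C_mul _ ((PSupp.q h1).pow 2))).add (PSupp.C_mul _ ((PSupp.q h2).pow 2)))

lemma supp_bP (n k : ℕ) : PSupp {k, n - k} (bP n k) := by
  unfold bP
  have h1 : k ∈ ({k, n - k} : Finset ℕ) := by simp
  have h2 : n - k ∈ ({k, n - k} : Finset ℕ) := by simp
  exact ((PSupp.p h1).mul (PSupp.q h2)).sub ((PSupp.p h2).mul (PSupp.q h1))

lemma supp_cP (n k : ℕ) : PSupp {k, n - k} (cP n k) := by
  unfold cP
  have h1 : k ∈ ({k, n - k} : Finset ℕ) := by simp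
  have h2 : n - k ∈ ({k, n - k} : Finset ℕ) := by simp
  exact PSupp.C_mul _ (((((PSupp.p h2).pow 2).sub ((PSupp.p h1).pow 2)).add
    (PSupp.C_mul _ ((PSupp.q h2).pow 2))).sub (PSupp.C_mul _ ((PSupp.q h1).pow 2)))

lemma supp_dP (n k : ℕ) : PSupp {k, n - k} (dP n k) := by
  unfold dP
  have h1 : k ∈ ({k, n - k} : Finset ℕ) := by simp
  have h2 : n - k ∈ ({k, n - k} : Finset ℕ) := by simp
  exact PSupp.C_mul _ ((((PSupp.p h1).mul (PSupp.p h2))).add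
    ((PSupp.C_mul _ (PSupp.q h1)).mul (PSupp.q h2)))

lemma supp_aHalf (n : ℕ) : PSupp {n / 2} (aHalf n) := by
  unfold aHalf
  have h1 : n / 2 ∈ ({n / 2} : Finset ℕ) := by simp
  exact PSupp.C_mul _ (((PSupp.p h1).pow 2).add (PSupp.C_mul _ ((PSupp.q h1).pow 2)))

/-! ### scaled generators and the core bracket table -/

noncomputable def a0 (n k : ℕ) : MP :=
  pP k ^ 2 + pP (n - k) ^ 2
    + MvPolynomial.C (omg n k ^ 2) * qP k ^ 2
    + MvPolynomial.C (omg n k ^ 2) * qP (n - k) ^ 2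

noncomputable def c0 (n k : ℕ) : MP :=
  pP (n - k) ^ 2 - pP k ^ 2
    + MvPolynomial.C (omg n k ^ 2) * qP (n - k) ^ 2
    - MvPolynomial.C (omg n k ^ 2) * qP k ^ 2

noncomputable def d0 (n k : ℕ) : MP :=
  pP k * pP (n - k) + MvPolynomial.C (omg n k ^ 2) * qP k * qP (n - k)

lemma aP_eq (n k : ℕ) : aP n k = MvPolynomial.C (1 / (2 * omg n k)) * a0 n k := rfl
lemma cP_eq (n k : ℕ) : cP n k = MvPolynomial.C (1 / (2 * omg n k)) * c0 n k := rfl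
lemma dP_eq (n k : ℕ) : dP n k = MvPolynomial.C (1 / omg n k) * d0 n k := rfl

lemma supp_a0 (n k : ℕ) : PSupp {k, n - k} (a0 n k) := by
  have := supp_aP n k
  rw [aP_eq] at this
  unfold a0
  intro j hj
  have h1 : k ∈ ({k, n - k} : Finset ℕ) := by simp
  have h2 : n - k ∈ ({k, n - k} : Finset ℕ) := by simp
  exact ((((PSupp.p h1).pow 2).add ((PSupp.p h2).pow 2)).add
    (PSupp.C_mul _ ((PSupp.q h1).pow 2))).add (PSupp.C_mul _ ((PSupp.q h2).pow 2)) j hj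

lemma supp_c0 (n k : ℕ) : PSupp {k, n - k} (c0 n k) := by
  unfold c0
  have h1 : k ∈ ({k, n - k} : Finset ℕ) := by simp
  have h2 : n - k ∈ ({k, n - k} : Finset ℕ) := by simp
  exact ((((PSupp.p h2).pow 2).sub ((PSupp.p h1).pow 2)).add
    (PSupp.C_mul _ ((PSupp.q h2).pow 2))).sub (PSupp.C_mul _ ((PSupp.q h1).pow 2))

lemma supp_d0 (n k : ℕ) : PSupp {k, n - k} (d0 n k) := by
  unfold d0
  have h1 : k ∈ ({k, n - k} : Finset ℕ) := by simp
  have h2 : n - k ∈ ({k, n - k} : Finset ℕ) := by simp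
  exact (((PSupp.p h1).mul (PSupp.p h2))).add
    ((PSupp.C_mul _ (PSupp.q h1)).mul (PSupp.q h2))

lemma pb_two {n k : ℕ} (h1 : 1 ≤ k) (h2 : 2 * k < n) {f : MP}
    (hf : PSupp {k, n - k} f) (g : MP) :
    pb n f g = pbj k f g + pbj (n - k) f g :=
  pb_reduce_pair hf (by simp only [Finset.mem_Icc]; omega)
    (by simp only [Finset.mem_Icc]; omega) (by omega) g

section CoreTable
variable {n k : ℕ}

lemma pb_a0_b0 (h1 : 1 ≤ k) (h2 : 2 * k < n) : pb n (a0 n k) (bP n k) = 0 := by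
  have hkm : k ≠ n - k := by omega
  have hmk : n - k ≠ k := by omega
  rw [pb_two h1 h2 (supp_a0 n k)]
  simp only [pbj, pderiv_C, a0, bP, map_add, map_sub, pderiv_C_mul, pderiv_mul, pderiv_pow,
    pd_qq, pd_pp, pd_qp, pd_pq, pd_qq' hkm, pd_qq' hmk, pd_pp' hkm, pd_pp' hmk]
  ring

lemma pb_a0_c0 (h1 : 1 ≤ k) (h2 : 2 * k < n) : pb n (a0 n k) (c0 n k) = 0 := by
  have hkm : k ≠ n - k := by omega
  have hmk : n - k ≠ k := by omega
  rw [pb_two h1 h2 (supp_a0 n k)]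
  simp only [pbj, pderiv_C, a0, c0, map_add, map_sub, pderiv_C_mul, pderiv_mul, pderiv_pow,
    pd_qq, pd_pp, pd_qp, pd_pq, pd_qq' hkm, pd_qq' hmk, pd_pp' hkm, pd_pp' hmk]
  ring

lemma pb_a0_d0 (h1 : 1 ≤ k) (h2 : 2 * k < n) : pb n (a0 n k) (d0 n k) = 0 := by
  have hkm : k ≠ n - k := by omega
  have hmk : n - k ≠ k := by omega
  rw [pb_two h1 h2 (supp_a0 n k)]
  simp only [pbj, pderiv_C, a0, d0, map_add, map_sub, pderiv_C_mul, pderiv_mul, pderiv_pow,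
    pd_qq, pd_pp, pd_qp, pd_pq, pd_qq' hkm, pd_qq' hmk, pd_pp' hkm, pd_pp' hmk]
  ring

lemma pb_b0_c0 (h1 : 1 ≤ k) (h2 : 2 * k < n) : pb n (bP n k) (c0 n k) = MvPolynomial.C 4 * d0 n k := by
  have hkm : k ≠ n - k := by omega
  have hmk : n - k ≠ k := by omega
  rw [pb_two h1 h2 (supp_bP n k)]
  simp only [pbj, pderiv_C, bP, c0, d0, map_ofNat, map_add, map_sub, pderiv_C_mul, pderiv_mul, pderiv_pow,
    pd_qq, pd_pp, pd_qp, pd_pq, pd_qq' hkm, pd_qq' hmk, pd_pp' hkm, pd_pp' hmk]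
  push_cast
  ring

lemma pb_b0_d0 (h1 : 1 ≤ k) (h2 : 2 * k < n) : pb n (bP n k) (d0 n k) = - c0 n k := by
  have hkm : k ≠ n - k := by omega
  have hmk : n - k ≠ k := by omega
  rw [pb_two h1 h2 (supp_bP n k)]
  simp only [pbj, pderiv_C, bP, c0, d0, map_ofNat, map_add, map_sub, pderiv_C_mul, pderiv_mul, pderiv_pow,
    pd_qq, pd_pp, pd_qp, pd_pq, pd_qq' hkm, pd_qq' hmk, pd_pp' hkm, pd_pp' hmk]
  push_cast
  ring

lemma pb_c0_d0 (h1 : 1 ≤ k) (h2 : 2 * k < n) : pb n (c0 n k) (d0 n k) =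
    MvPolynomial.C 4 * (MvPolynomial.C (omg n k ^ 2) * bP n k) := by
  have hkm : k ≠ n - k := by omega
  have hmk : n - k ≠ k := by omega
  rw [pb_two h1 h2 (supp_c0 n k)]
  simp only [pbj, pderiv_C, bP, c0, d0, map_ofNat, map_add, map_sub, pderiv_C_mul, pderiv_mul, pderiv_pow,
    pd_qq, pd_pp, pd_qp, pd_pq, pd_qq' hkm, pd_qq' hmk, pd_pp' hkm, pd_pp' hmk]
  push_cast
  ring

lemma pb_ab (h1 : 1 ≤ k) (h2 : 2 * k < n) : pb n (aP n k) (bP n k) = 0 := by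
  rw [aP_eq, pb_C_mul_left, pb_a0_b0 h1 h2, mul_zero]

lemma pb_ac (h1 : 1 ≤ k) (h2 : 2 * k < n) : pb n (aP n k) (cP n k) = 0 := by
  rw [aP_eq, cP_eq, pb_C_mul_left, pb_C_mul_right, pb_a0_c0 h1 h2, mul_zero, mul_zero]

lemma pb_ad (h1 : 1 ≤ k) (h2 : 2 * k < n) : pb n (aP n k) (dP n k) = 0 := by
  rw [aP_eq, dP_eq, pb_C_mul_left, pb_C_mul_right, pb_a0_d0 h1 h2, mul_zero, mul_zero]

lemma pb_bc (h1 : 1 ≤ k) (h2 : 2 * k < n) : pb n (bP n k) (cP n k) = MvPolynomial.C 2 * dP n k := by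
  have hω : omg n k ≠ 0 := omg_ne h1 (by omega)
  rw [cP_eq, pb_C_mul_right, pb_b0_c0 h1 h2, dP_eq, ← mul_assoc, ← mul_assoc,
    ← MvPolynomial.C_mul, ← MvPolynomial.C_mul]
  congr 2
  field_simp
  ring

lemma pb_bd (h1 : 1 ≤ k) (h2 : 2 * k < n) : pb n (bP n k) (dP n k) = -(MvPolynomial.C 2 * cP n k) := by
  have hω : omg n k ≠ 0 := omg_ne h1 (by omega)
  rw [dP_eq, pb_C_mul_right, pb_b0_d0 h1 h2, cP_eq, mul_neg, ← mul_assoc,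
    ← MvPolynomial.C_mul]
  rw [show (2 * (1 / (2 * omg n k)) : ℝ) = 1 / omg n k by field_simp]

lemma pb_cd (h1 : 1 ≤ k) (h2 : 2 * k < n) : pb n (cP n k) (dP n k) = MvPolynomial.C 2 * bP n k := by
  have hω : omg n k ≠ 0 := omg_ne h1 (by omega)
  rw [cP_eq, dP_eq, pb_C_mul_left, pb_C_mul_right, pb_c0_d0 h1 h2]
  rw [← mul_assoc, ← mul_assoc, ← mul_assoc, ← MvPolynomial.C_mul, ← MvPolynomial.C_mul,
    ← MvPolynomial.C_mul]
  congr 2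
  field_simp
  ring

end CoreTable


/-! ### brackets with `H2` -/

noncomputable def hP (n j : ℕ) : MP :=
  MvPolynomial.C (1 / 2 : ℝ) * (pP j ^ 2 + MvPolynomial.C (omg n j ^ 2) * qP j ^ 2)

lemma H2_eq (n : ℕ) : H2 n = ∑ j ∈ Finset.Icc 1 (n - 1), hP n j := rfl

lemma supp_hP (n j : ℕ) : PSupp {j} (hP n j) := by
  unfold hP
  have h1 : j ∈ ({j} : Finset ℕ) := by simp
  exact PSupp.C_mul _ (((PSupp.p h1).pow 2).add (PSupp.C_mul _ ((PSupp.q h1).pow 2)))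

lemma pb_H2_two {n k : ℕ} (h1 : 1 ≤ k) (h2 : 2 * k < n) {f : MP}
    (hf : PSupp {k, n - k} f) :
    pb n f (H2 n) = pb n f (hP n k) + pb n f (hP n (n - k)) := by
  rw [H2_eq, pb_sum_right,
    ← Finset.sum_pair (f := fun j => pb n f (hP n j)) (show k ≠ n - k by omega)]
  refine (Finset.sum_subset ?_ ?_).symm
  · intro x hx
    simp only [Finset.mem_insert, Finset.mem_singleton] at hx
    simp only [Finset.mem_Icc]
    omega
  · intro j hj hj2
    simp only [Finset.mem_insert, Finset.mem_singleton, not_or] at hj2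
    exact pb_disj hf (supp_hP n j)
      (by intro x hx; simp only [Finset.mem_insert, Finset.mem_singleton] at hx ⊢; omega)

lemma pb_b_H2 {n k : ℕ} (h1 : 1 ≤ k) (h2 : 2 * k < n) : pb n (bP n k) (H2 n) = 0 := by
  have hkm : k ≠ n - k := by omega
  have hmk : n - k ≠ k := by omega
  have hsub : omg n (n - k) = omg n k := omg_sub (by omega) (by omega)
  rw [pb_H2_two h1 h2 (supp_bP n k), pb_two h1 h2 (supp_bP n k),
    pb_two h1 h2 (supp_bP n k)]
  simp only [pbj, pderiv_C, hP, bP, map_add, map_sub, pderiv_C_mul, pderiv_mul,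
    pderiv_pow, pd_qq, pd_pp, pd_qp, pd_pq, pd_qq' hkm, pd_qq' hmk, pd_pp' hkm,
    pd_pp' hmk, hsub]
  ring

lemma pb_a0_H2 {n k : ℕ} (h1 : 1 ≤ k) (h2 : 2 * k < n) : pb n (a0 n k) (H2 n) = 0 := by
  have hkm : k ≠ n - k := by omega
  have hmk : n - k ≠ k := by omega
  have hsub : omg n (n - k) = omg n k := omg_sub (by omega) (by omega)
  rw [pb_H2_two h1 h2 (supp_a0 n k), pb_two h1 h2 (supp_a0 n k),
    pb_two h1 h2 (supp_a0 n k)]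
  simp only [pbj, pderiv_C, hP, a0, map_add, map_sub, pderiv_C_mul, pderiv_mul,
    pderiv_pow, pd_qq, pd_pp, pd_qp, pd_pq, pd_qq' hkm, pd_qq' hmk, pd_pp' hkm,
    pd_pp' hmk, hsub]
  ring

lemma pb_c0_H2 {n k : ℕ} (h1 : 1 ≤ k) (h2 : 2 * k < n) : pb n (c0 n k) (H2 n) = 0 := by
  have hkm : k ≠ n - k := by omega
  have hmk : n - k ≠ k := by omega
  have hsub : omg n (n - k) = omg n k := omg_sub (by omega) (by omega)
  rw [pb_H2_two h1 h2 (supp_c0 n k), pb_two h1 h2 (supp_c0 n k),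
    pb_two h1 h2 (supp_c0 n k)]
  simp only [pbj, pderiv_C, hP, c0, map_add, map_sub, pderiv_C_mul, pderiv_mul,
    pderiv_pow, pd_qq, pd_pp, pd_qp, pd_pq, pd_qq' hkm, pd_qq' hmk, pd_pp' hkm,
    pd_pp' hmk, hsub]
  ring

lemma pb_d0_H2 {n k : ℕ} (h1 : 1 ≤ k) (h2 : 2 * k < n) : pb n (d0 n k) (H2 n) = 0 := by
  have hkm : k ≠ n - k := by omega
  have hmk : n - k ≠ k := by omega
  have hsub : omg n (n - k) = omg n k := omg_sub (by omega) (by omega)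
  rw [pb_H2_two h1 h2 (supp_d0 n k), pb_two h1 h2 (supp_d0 n k),
    pb_two h1 h2 (supp_d0 n k)]
  simp only [pbj, pderiv_C, hP, d0, map_add, map_sub, pderiv_C_mul, pderiv_mul,
    pderiv_pow, pd_qq, pd_pp, pd_qp, pd_pq, pd_qq' hkm, pd_qq' hmk, pd_pp' hkm,
    pd_pp' hmk, hsub]
  ring

lemma pb_a_H2 {n k : ℕ} (h1 : 1 ≤ k) (h2 : 2 * k < n) : pb n (aP n k) (H2 n) = 0 := by
  rw [aP_eq, pb_C_mul_left, pb_a0_H2 h1 h2, mul_zero]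

lemma pb_c_H2 {n k : ℕ} (h1 : 1 ≤ k) (h2 : 2 * k < n) : pb n (cP n k) (H2 n) = 0 := by
  rw [cP_eq, pb_C_mul_left, pb_c0_H2 h1 h2, mul_zero]

lemma pb_d_H2 {n k : ℕ} (h1 : 1 ≤ k) (h2 : 2 * k < n) : pb n (dP n k) (H2 n) = 0 := by
  rw [dP_eq, pb_C_mul_left, pb_d0_H2 h1 h2, mul_zero]

lemma pb_aHalf_H2 {n : ℕ} (hn : 4 ≤ n) (hev : 2 ∣ n) : pb n (aHalf n) (H2 n) = 0 := by
  have hmem : n / 2 ∈ Finset.Icc 1 (n - 1) := by simp only [Finset.mem_Icc]; omega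
  rw [H2_eq, pb_sum_right,
    ← Finset.sum_subset (s₁ := ({n / 2} : Finset ℕ))
      (by intro x hx; simp only [Finset.mem_singleton] at hx; subst hx; exact hmem)
      (fun j _ hj => pb_disj (supp_aHalf n) (supp_hP n j)
        (by intro x hx; simp only [Finset.mem_singleton] at hx hj ⊢; omega))]
  rw [Finset.sum_singleton, pb_reduce_single (supp_aHalf n) hmem]
  simp only [pbj, pderiv_C, hP, aHalf, map_add, pderiv_C_mul, pderiv_mul,
    pderiv_pow, pd_qq, pd_pp, pd_qp, pd_pq]
  ring


/-! ### generators at different indices -/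

def IsGen (n k : ℕ) (X : MP) : Prop :=
  X = aP n k ∨ X = bP n k ∨ X = cP n k ∨ X = dP n k

lemma supp_gen {n k : ℕ} {X : MP} (h : IsGen n k X) : PSupp {k, n - k} X := by
  rcases h with rfl | rfl | rfl | rfl
  exacts [supp_aP n k, supp_bP n k, supp_cP n k, supp_dP n k]

lemma pb_pair_disj {n k l : ℕ} (hk1 : 1 ≤ k) (hk2 : 2 * k < n) (hl1 : 1 ≤ l)
    (hl2 : 2 * l < n) (hkl : k ≠ l) {f g : MP} (hf : PSupp {k, n - k} f)
    (hg : PSupp {l, n - l} g) : pb n f g = 0 :=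
  pb_disj hf hg (by
    intro x hx
    simp only [Finset.mem_insert, Finset.mem_singleton] at hx ⊢
    omega)

lemma pb_aP_gen {n k l : ℕ} (hk1 : 1 ≤ k) (hk2 : 2 * k < n) (hl1 : 1 ≤ l)
    (hl2 : 2 * l < n) {X : MP} (hX : IsGen n l X) : pb n (aP n k) X = 0 := by
  by_cases hkl : k = l
  · subst hkl
    rcases hX with rfl | rfl | rfl | rfl
    exacts [pb_self n _, pb_ab hk1 hk2, pb_ac hk1 hk2, pb_ad hk1 hk2]
  · exact pb_pair_disj hk1 hk2 hl1 hl2 hkl (supp_aP n k) (supp_gen hX)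

lemma pb_aHalf_gen {n l : ℕ} (hev : 2 ∣ n) (hl1 : 1 ≤ l) (hl2 : 2 * l < n) {X : MP}
    (hX : IsGen n l X) : pb n (aHalf n) X = 0 :=
  pb_disj (supp_aHalf n) (supp_gen hX) (by
    intro x hx
    simp only [Finset.mem_insert, Finset.mem_singleton] at hx ⊢
    omega)

lemma pb_aE_gen {n m l : ℕ} (hev : 2 ∣ n) (hm1 : 1 ≤ m) (hm2 : 2 * m ≤ n) (hl1 : 1 ≤ l)
    (hl2 : 2 * l < n) {X : MP} (hX : IsGen n l X) : pb n (aE n m) X = 0 := by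
  unfold aE
  split_ifs with h
  · exact pb_aHalf_gen hev hl1 hl2 hX
  · exact pb_aP_gen hm1 (by omega) hl1 hl2 hX

lemma pb_aE_aHalf {n m : ℕ} (hev : 2 ∣ n) (hm1 : 1 ≤ m) (hm2 : 2 * m ≤ n) :
    pb n (aE n m) (aHalf n) = 0 := by
  unfold aE
  split_ifs with h
  · exact pb_self n _
  · refine pb_disj (supp_aP n m) (supp_aHalf n) ?_
    intro x hx
    simp only [Finset.mem_insert, Finset.mem_singleton] at hx ⊢
    omega

/-! ### reduction of brackets with `Hbar4` -/

lemma pb_Hbar4_reduce (n : ℕ) (β : ℝ) (f : MP)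
    (hA : ∀ k, 1 ≤ k → 2 * k < n → pb n f (aP n k) = 0)
    (hH : pb n f (aHalf n) = 0) :
    pb n f (Hbar4 n β) = MvPolynomial.C (β / n) * (
      (∑ k ∈ (Finset.Ico 1 n).filter (fun k => 2 * k < n),
        MvPolynomial.C (omg n k ^ 2 / 32) * (0 - pb n f (bP n k ^ 2)))
      + MvPolynomial.C (1 / 8 : ℝ) *
          ∑ k ∈ (Finset.Ico 1 n).filter (fun k => 4 * k < n),
            MvPolynomial.C (omg n (2 * k) ^ 2) *
              pb n f (dP n k * dP n (n / 2 - k) - cP n k * cP n (n / 2 - k))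
      + (if 4 ∣ n then
          MvPolynomial.C (1 / 16 : ℝ) * pb n f (dP n (n / 4) ^ 2 - cP n (n / 4) ^ 2)
        else 0)) := by
  unfold Hbar4
  rw [pb_C_mul_right]
  refine congrArg (MvPolynomial.C (β / n) * ·) ?_
  rw [pb_add_right, pb_add_right, pb_add_right, pb_add_right, pb_add_right]
  have h1 : pb n f (∑ k ∈ (Finset.Ico 1 n).filter (fun k => 2 * k < n),
      ∑ l ∈ (Finset.Ico (k + 1) n).filter (fun l => 2 * l < n),
        MvPolynomial.C (omg n k * omg n l / 4) * (aP n k * aP n l)) = 0 := by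
    rw [pb_sum_right]
    refine Finset.sum_eq_zero fun k hk => ?_
    simp only [Finset.mem_filter, Finset.mem_Ico] at hk
    rw [pb_sum_right]
    refine Finset.sum_eq_zero fun l hl => ?_
    simp only [Finset.mem_filter, Finset.mem_Ico] at hl
    rw [pb_C_mul_right,
      pb_mul_right_zero n (hA k (by omega) (by omega)) (hA l (by omega) (by omega)),
      mul_zero]
  have h2 : pb n f (∑ k ∈ (Finset.Ico 1 n).filter (fun k => 2 * k < n),
      MvPolynomial.C (omg n k ^ 2 / 32) *
        (MvPolynomial.C (3 : ℝ) * aP n k ^ 2 - bP n k ^ 2)) =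
      ∑ k ∈ (Finset.Ico 1 n).filter (fun k => 2 * k < n),
        MvPolynomial.C (omg n k ^ 2 / 32) * (0 - pb n f (bP n k ^ 2)) := by
    rw [pb_sum_right]
    refine Finset.sum_congr rfl fun k hk => ?_
    simp only [Finset.mem_filter, Finset.mem_Ico] at hk
    rw [pb_C_mul_right, pb_sub_right, pb_C_mul_right,
      pb_sq_right_zero n (hA k (by omega) (by omega)), mul_zero]
  have h3 : pb n f (MvPolynomial.C (1 / 4 : ℝ) * aHalf n ^ 2) = 0 := by
    rw [pb_C_mul_right, pb_sq_right_zero n hH, mul_zero]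
  have h4 : pb n f (MvPolynomial.C (1 / 2 : ℝ) * aHalf n *
      (∑ k ∈ (Finset.Ico 1 n).filter (fun k => 2 * k < n),
        MvPolynomial.C (omg n k) * aP n k)) = 0 := by
    rw [mul_assoc, pb_C_mul_right]
    have hsum : pb n f (∑ k ∈ (Finset.Ico 1 n).filter (fun k => 2 * k < n),
        MvPolynomial.C (omg n k) * aP n k) = 0 := by
      rw [pb_sum_right]
      refine Finset.sum_eq_zero fun k hk => ?_
      simp only [Finset.mem_filter, Finset.mem_Ico] at hk
      rw [pb_C_mul_right, hA k (by omega) (by omega), mul_zero]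
    rw [pb_mul_right_zero n hH hsum, mul_zero]
  have h5 : pb n f (MvPolynomial.C (1 / 8 : ℝ) *
      ∑ k ∈ (Finset.Ico 1 n).filter (fun k => 4 * k < n),
        MvPolynomial.C (omg n (2 * k) ^ 2) *
          (dP n k * dP n (n / 2 - k) - cP n k * cP n (n / 2 - k))) =
      MvPolynomial.C (1 / 8 : ℝ) *
        ∑ k ∈ (Finset.Ico 1 n).filter (fun k => 4 * k < n),
          MvPolynomial.C (omg n (2 * k) ^ 2) *
            pb n f (dP n k * dP n (n / 2 - k) - cP n k * cP n (n / 2 - k)) := by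
    rw [pb_C_mul_right, pb_sum_right]
    congr 1
    exact Finset.sum_congr rfl fun k _ => pb_C_mul_right n _ f _
  have h6 : pb n f (if 4 ∣ n then
      MvPolynomial.C (1 / 16 : ℝ) * (dP n (n / 4) ^ 2 - cP n (n / 4) ^ 2) else 0) =
      (if 4 ∣ n then
        MvPolynomial.C (1 / 16 : ℝ) * pb n f (dP n (n / 4) ^ 2 - cP n (n / 4) ^ 2)
      else 0) := by
    split_ifs with h
    · exact pb_C_mul_right n _ f _
    · exact pb_zero_right n f
  rw [h1, h2, h3, h4, h5, h6]
  ring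


/-! ### more combinators and flipped table entries -/

lemma pb_sq_left (n : ℕ) (f g : MP) :
    pb n (f ^ 2) g = pb n f g * f + f * pb n f g := by
  rw [sq, pb_mul_left]

lemma pb_sq_left_zero (n : ℕ) {f g : MP} (h : pb n f g = 0) : pb n (f ^ 2) g = 0 := by
  rw [pb_sq_left, h]; ring

lemma pb_mul_left_zero (n : ℕ) {f g h : MP} (hf : pb n f h = 0) (hg : pb n g h = 0) :
    pb n (f * g) h = 0 := by
  rw [pb_mul_left, hf, hg]; ring

lemma pb_cb {n k : ℕ} (h1 : 1 ≤ k) (h2 : 2 * k < n) :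
    pb n (cP n k) (bP n k) = -(MvPolynomial.C 2 * dP n k) := by
  rw [pb_antisymm, pb_bc h1 h2]

lemma pb_db {n k : ℕ} (h1 : 1 ≤ k) (h2 : 2 * k < n) :
    pb n (dP n k) (bP n k) = MvPolynomial.C 2 * cP n k := by
  rw [pb_antisymm, pb_bd h1 h2, neg_neg]

lemma pb_dc {n k : ℕ} (h1 : 1 ≤ k) (h2 : 2 * k < n) :
    pb n (dP n k) (cP n k) = -(MvPolynomial.C 2 * bP n k) := by
  rw [pb_antisymm, pb_cd h1 h2]

lemma pb_ba {n k : ℕ} (h1 : 1 ≤ k) (h2 : 2 * k < n) :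
    pb n (bP n k) (aP n k) = 0 := by
  rw [pb_antisymm, pb_ab h1 h2, neg_zero]

lemma pb_ca {n k : ℕ} (h1 : 1 ≤ k) (h2 : 2 * k < n) :
    pb n (cP n k) (aP n k) = 0 := by
  rw [pb_antisymm, pb_ac h1 h2, neg_zero]

lemma pb_da {n k : ℕ} (h1 : 1 ≤ k) (h2 : 2 * k < n) :
    pb n (dP n k) (aP n k) = 0 := by
  rw [pb_antisymm, pb_ad h1 h2, neg_zero]

lemma pb_gen_aP {n l k : ℕ} (hl1 : 1 ≤ l) (hl2 : 2 * l < n) (hk1 : 1 ≤ k)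
    (hk2 : 2 * k < n) {X : MP} (hX : IsGen n l X) : pb n X (aP n k) = 0 := by
  rw [pb_antisymm, pb_aP_gen hk1 hk2 hl1 hl2 hX, neg_zero]

lemma pb_gen_aHalf {n l : ℕ} (hev : 2 ∣ n) (hl1 : 1 ≤ l) (hl2 : 2 * l < n) {X : MP}
    (hX : IsGen n l X) : pb n X (aHalf n) = 0 := by
  rw [pb_antisymm, pb_aHalf_gen hev hl1 hl2 hX, neg_zero]

lemma pb_bP_bP {n j k : ℕ} (hj1 : 1 ≤ j) (hj2 : 2 * j < n) (hk1 : 1 ≤ k)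
    (hk2 : 2 * k < n) : pb n (bP n j) (bP n k) = 0 := by
  by_cases hjk : j = k
  · subst hjk; exact pb_self n _
  · exact pb_pair_disj hj1 hj2 hk1 hk2 hjk (supp_bP n j) (supp_bP n k)

/-! ### supports of the composite integrals -/

lemma supp_eP {n j : ℕ} (hj1 : 1 ≤ j) (hj4 : 4 * j < n) (hev : 2 ∣ n) :
    PSupp {j, n - j, n / 2 - j, n / 2 + j} (bP n j - bP n (n / 2 - j)) := by
  refine PSupp.sub (PSupp.mono (supp_bP n j) ?_) (PSupp.mono (supp_bP n (n / 2 - j)) ?_) <;>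
    · intro x hx
      simp only [Finset.mem_insert, Finset.mem_singleton] at hx ⊢
      omega

lemma supp_QQ {n j : ℕ} (hj1 : 1 ≤ j) (hj4 : 4 * j < n) (hev : 2 ∣ n) :
    PSupp {j, n - j, n / 2 - j, n / 2 + j} (QQ n j) := by
  have hs1 : ({j, n - j} : Finset ℕ) ⊆ {j, n - j, n / 2 - j, n / 2 + j} := by
    intro x hx
    simp only [Finset.mem_insert, Finset.mem_singleton] at hx ⊢
    omega
  have hs2 : ({n / 2 - j, n - (n / 2 - j)} : Finset ℕ) ⊆ {j, n - j, n / 2 - j, n / 2 + j} := by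
    intro x hx
    simp only [Finset.mem_insert, Finset.mem_singleton] at hx ⊢
    omega
  unfold QQ
  exact ((PSupp.C_mul _ ((PSupp.mono (supp_bP n j) hs1).pow 2)).add
    (PSupp.C_mul _ ((PSupp.mono (supp_bP n (n / 2 - j)) hs2).pow 2))).add
    (PSupp.C_mul _ (((PSupp.mono (supp_cP n j) hs1).mul
      (PSupp.mono (supp_cP n (n / 2 - j)) hs2)).sub
      ((PSupp.mono (supp_dP n j) hs1).mul (PSupp.mono (supp_dP n (n / 2 - j)) hs2))))

lemma supp_Gterm {n k : ℕ} (hk1 : 1 ≤ k) (hk4 : 4 * k < n) (hev : 2 ∣ n) :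
    PSupp {k, n - k, n / 2 - k, n / 2 + k}
      (dP n k * dP n (n / 2 - k) - cP n k * cP n (n / 2 - k)) := by
  have hs1 : ({k, n - k} : Finset ℕ) ⊆ {k, n - k, n / 2 - k, n / 2 + k} := by
    intro x hx
    simp only [Finset.mem_insert, Finset.mem_singleton] at hx ⊢
    omega
  have hs2 : ({n / 2 - k, n - (n / 2 - k)} : Finset ℕ) ⊆ {k, n - k, n / 2 - k, n / 2 + k} := by
    intro x hx
    simp only [Finset.mem_insert, Finset.mem_singleton] at hx ⊢
    omega
  exact ((PSupp.mono (supp_dP n k) hs1).mul (PSupp.mono (supp_dP n (n / 2 - k)) hs2)).sub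
    ((PSupp.mono (supp_cP n k) hs1).mul (PSupp.mono (supp_cP n (n / 2 - k)) hs2))

lemma supp_T6 (n : ℕ) :
    PSupp {n / 4, n - n / 4} (dP n (n / 4) ^ 2 - cP n (n / 4) ^ 2) :=
  ((supp_dP n (n / 4)).pow 2).sub ((supp_cP n (n / 4)).pow 2)

/-! ### the key same-block interaction: `e_j` with the `j`-th `G`-term -/

lemma pb_eP_Gterm {n j : ℕ} (hj1 : 1 ≤ j) (hj4 : 4 * j < n) (hev : 2 ∣ n) :
    pb n (bP n j - bP n (n / 2 - j))
      (dP n j * dP n (n / 2 - j) - cP n j * cP n (n / 2 - j)) = 0 := by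
  have hj2 : 2 * j < n := by omega
  have hj'1 : 1 ≤ n / 2 - j := by omega
  have hj'2 : 2 * (n / 2 - j) < n := by omega
  have hne : j ≠ n / 2 - j := by omega
  have hne' : n / 2 - j ≠ j := by omega
  have D1 : pb n (bP n (n / 2 - j)) (dP n j) = 0 :=
    pb_pair_disj hj'1 hj'2 hj1 hj2 hne' (supp_bP n (n / 2 - j)) (supp_dP n j)
  have D2 : pb n (bP n j) (dP n (n / 2 - j)) = 0 :=
    pb_pair_disj hj1 hj2 hj'1 hj'2 hne (supp_bP n j) (supp_dP n (n / 2 - j))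
  have D3 : pb n (bP n (n / 2 - j)) (cP n j) = 0 :=
    pb_pair_disj hj'1 hj'2 hj1 hj2 hne' (supp_bP n (n / 2 - j)) (supp_cP n j)
  have D4 : pb n (bP n j) (cP n (n / 2 - j)) = 0 :=
    pb_pair_disj hj1 hj2 hj'1 hj'2 hne (supp_bP n j) (supp_cP n (n / 2 - j))
  rw [pb_sub_right, pb_mul_right, pb_mul_right, pb_sub_left, pb_sub_left, pb_sub_left,
    pb_sub_left, pb_bd hj1 hj2, pb_bd hj'1 hj'2, pb_bc hj1 hj2, pb_bc hj'1 hj'2,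
    D1, D2, D3, D4]
  ring

lemma pb_eP_Gterm' {n j : ℕ} (hj1 : 1 ≤ j) (hj4 : 4 * j < n) (hev : 2 ∣ n) :
    pb n (bP n j - bP n (n / 2 - j))
      (cP n j * cP n (n / 2 - j) - dP n j * dP n (n / 2 - j)) = 0 := by
  rw [show cP n j * cP n (n / 2 - j) - dP n j * dP n (n / 2 - j)
      = (0 : MP) - (dP n j * dP n (n / 2 - j) - cP n j * cP n (n / 2 - j)) by ring,
    pb_sub_right, pb_eP_Gterm hj1 hj4 hev, pb_zero_right]
  ring


lemma isGen_a (n k : ℕ) : IsGen n k (aP n k) := Or.inl rfl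
lemma isGen_b (n k : ℕ) : IsGen n k (bP n k) := Or.inr (Or.inl rfl)
lemma isGen_c (n k : ℕ) : IsGen n k (cP n k) := Or.inr (Or.inr (Or.inl rfl))
lemma isGen_d (n k : ℕ) : IsGen n k (dP n k) := Or.inr (Or.inr (Or.inr rfl))

/-! ### the integrals commute with `H2` -/

lemma pb_aE_H2 {n m : ℕ} (hn : 4 ≤ n) (hev : 2 ∣ n) (hm1 : 1 ≤ m) (hm2 : 2 * m ≤ n) :
    pb n (aE n m) (H2 n) = 0 := by
  unfold aE
  split_ifs with h
  · exact pb_aHalf_H2 hn hev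
  · exact pb_a_H2 hm1 (by omega)

lemma pb_eP_H2 {n j : ℕ} (hj1 : 1 ≤ j) (hj4 : 4 * j < n) (hev : 2 ∣ n) :
    pb n (bP n j - bP n (n / 2 - j)) (H2 n) = 0 := by
  rw [pb_sub_left, pb_b_H2 hj1 (by omega), pb_b_H2 (show 1 ≤ n / 2 - j by omega)
    (show 2 * (n / 2 - j) < n by omega)]
  simp

lemma pb_QQ_H2 {n j : ℕ} (hj1 : 1 ≤ j) (hj4 : 4 * j < n) (hev : 2 ∣ n) :
    pb n (QQ n j) (H2 n) = 0 := by
  have hj2 : 2 * j < n := by omega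
  have hj'1 : 1 ≤ n / 2 - j := by omega
  have hj'2 : 2 * (n / 2 - j) < n := by omega
  unfold QQ
  rw [pb_add_left, pb_add_left, pb_C_mul_left, pb_C_mul_left, pb_C_mul_left,
    pb_sq_left_zero n (pb_b_H2 hj1 hj2), pb_sq_left_zero n (pb_b_H2 hj'1 hj'2),
    pb_sub_left,
    pb_mul_left_zero n (pb_c_H2 hj1 hj2) (pb_c_H2 hj'1 hj'2),
    pb_mul_left_zero n (pb_d_H2 hj1 hj2) (pb_d_H2 hj'1 hj'2)]
  simp

/-! ### the integrals commute with `Hbar4` -/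

lemma pb_aE_Hbar4 {n : ℕ} (hn : 4 ≤ n) (hev : 2 ∣ n) {m : ℕ} (hm1 : 1 ≤ m)
    (hm2 : 2 * m ≤ n) (β : ℝ) : pb n (aE n m) (Hbar4 n β) = 0 := by
  rw [pb_Hbar4_reduce n β _
    (fun k hk1 hk2 => pb_aE_gen hev hm1 hm2 hk1 hk2 (isGen_a n k))
    (pb_aE_aHalf hev hm1 hm2)]
  have P1 : ∑ k ∈ (Finset.Ico 1 n).filter (fun k => 2 * k < n),
      MvPolynomial.C (omg n k ^ 2 / 32) * (0 - pb n (aE n m) (bP n k ^ 2)) = 0 := by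
    refine Finset.sum_eq_zero fun k hk => ?_
    simp only [Finset.mem_filter, Finset.mem_Ico] at hk
    rw [pb_sq_right_zero n (pb_aE_gen hev hm1 hm2 (by omega) (by omega) (isGen_b n k))]
    simp
  have P2 : ∑ k ∈ (Finset.Ico 1 n).filter (fun k => 4 * k < n),
      MvPolynomial.C (omg n (2 * k) ^ 2) *
        pb n (aE n m) (dP n k * dP n (n / 2 - k) - cP n k * cP n (n / 2 - k)) = 0 := by
    refine Finset.sum_eq_zero fun k hk => ?_
    simp only [Finset.mem_filter, Finset.mem_Ico] at hk
    have hk1 : (1 : ℕ) ≤ k := by omega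
    have hk2 : 2 * k < n := by omega
    have hk'1 : 1 ≤ n / 2 - k := by omega
    have hk'2 : 2 * (n / 2 - k) < n := by omega
    rw [pb_sub_right,
      pb_mul_right_zero n (pb_aE_gen hev hm1 hm2 hk1 hk2 (isGen_d n k))
        (pb_aE_gen hev hm1 hm2 hk'1 hk'2 (isGen_d n (n / 2 - k))),
      pb_mul_right_zero n (pb_aE_gen hev hm1 hm2 hk1 hk2 (isGen_c n k))
        (pb_aE_gen hev hm1 hm2 hk'1 hk'2 (isGen_c n (n / 2 - k)))]
    simp
  rw [P1, P2]
  by_cases h4 : 4 ∣ n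
  · rw [if_pos h4, pb_sub_right,
      pb_sq_right_zero n (pb_aE_gen hev hm1 hm2 (by omega) (by omega) (isGen_d n (n / 4))),
      pb_sq_right_zero n (pb_aE_gen hev hm1 hm2 (by omega) (by omega) (isGen_c n (n / 4)))]
    simp
  · rw [if_neg h4]
    simp

lemma pb_eP_Hbar4 {n j : ℕ} (hn : 4 ≤ n) (hev : 2 ∣ n) (hj1 : 1 ≤ j)
    (hj4 : 4 * j < n) (β : ℝ) :
    pb n (bP n j - bP n (n / 2 - j)) (Hbar4 n β) = 0 := by
  have hj2 : 2 * j < n := by omega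
  have hj'1 : 1 ≤ n / 2 - j := by omega
  have hj'2 : 2 * (n / 2 - j) < n := by omega
  rw [pb_Hbar4_reduce n β _
    (fun k hk1 hk2 => by
      rw [pb_sub_left, pb_gen_aP hj1 hj2 hk1 hk2 (isGen_b n j),
        pb_gen_aP hj'1 hj'2 hk1 hk2 (isGen_b n (n / 2 - j))]
      simp)
    (by
      rw [pb_sub_left, pb_gen_aHalf hev hj1 hj2 (isGen_b n j),
        pb_gen_aHalf hev hj'1 hj'2 (isGen_b n (n / 2 - j))]
      simp)]
  have P1 : ∑ k ∈ (Finset.Ico 1 n).filter (fun k => 2 * k < n),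
      MvPolynomial.C (omg n k ^ 2 / 32) *
        (0 - pb n (bP n j - bP n (n / 2 - j)) (bP n k ^ 2)) = 0 := by
    refine Finset.sum_eq_zero fun k hk => ?_
    simp only [Finset.mem_filter, Finset.mem_Ico] at hk
    have hz : pb n (bP n j - bP n (n / 2 - j)) (bP n k) = 0 := by
      rw [pb_sub_left, pb_bP_bP hj1 hj2 (by omega) (by omega),
        pb_bP_bP hj'1 hj'2 (by omega) (by omega)]
      simp
    rw [pb_sq_right_zero n hz]
    simp
  have P2 : ∑ k ∈ (Finset.Ico 1 n).filter (fun k => 4 * k < n),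
      MvPolynomial.C (omg n (2 * k) ^ 2) *
        pb n (bP n j - bP n (n / 2 - j))
          (dP n k * dP n (n / 2 - k) - cP n k * cP n (n / 2 - k)) = 0 := by
    refine Finset.sum_eq_zero fun k hk => ?_
    simp only [Finset.mem_filter, Finset.mem_Ico] at hk
    by_cases hkj : k = j
    · subst hkj
      rw [pb_eP_Gterm hj1 hj4 hev, mul_zero]
    · rw [pb_disj (supp_eP hj1 hj4 hev) (supp_Gterm (by omega) (by omega) hev)
        (by intro x hx; simp only [Finset.mem_insert, Finset.mem_singleton] at hx ⊢; omega),
        mul_zero]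
  rw [P1, P2]
  by_cases h4 : 4 ∣ n
  · rw [if_pos h4,
      pb_disj (supp_eP hj1 hj4 hev) (supp_T6 n)
        (by intro x hx; simp only [Finset.mem_insert, Finset.mem_singleton] at hx ⊢; omega)]
    simp
  · rw [if_neg h4]
    simp

lemma pb_dQ_Hbar4 {n : ℕ} (hn : 4 ≤ n) (hev : 2 ∣ n) (h4 : 4 ∣ n) (β : ℝ) :
    pb n (dP n (n / 4)) (Hbar4 n β) = 0 := by
  have hm1 : 1 ≤ n / 4 := by omega
  have hm2 : 2 * (n / 4) < n := by omega
  rw [pb_Hbar4_reduce n β _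
    (fun k hk1 hk2 => pb_gen_aP hm1 hm2 hk1 hk2 (isGen_d n (n / 4)))
    (pb_gen_aHalf hev hm1 hm2 (isGen_d n (n / 4)))]
  have P2 : ∑ k ∈ (Finset.Ico 1 n).filter (fun k => 4 * k < n),
      MvPolynomial.C (omg n (2 * k) ^ 2) *
        pb n (dP n (n / 4))
          (dP n k * dP n (n / 2 - k) - cP n k * cP n (n / 2 - k)) = 0 := by
    refine Finset.sum_eq_zero fun k hk => ?_
    simp only [Finset.mem_filter, Finset.mem_Ico] at hk
    rw [pb_disj (supp_dP n (n / 4)) (supp_Gterm (by omega) (by omega) hev)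
      (by intro x hx; simp only [Finset.mem_insert, Finset.mem_singleton] at hx ⊢; omega),
      mul_zero]
  have P1 : ∑ k ∈ (Finset.Ico 1 n).filter (fun k => 2 * k < n),
      MvPolynomial.C (omg n k ^ 2 / 32) * (0 - pb n (dP n (n / 4)) (bP n k ^ 2)) =
      MvPolynomial.C (omg n (n / 4) ^ 2 / 32) *
        (0 - pb n (dP n (n / 4)) (bP n (n / 4) ^ 2)) := by
    refine Finset.sum_eq_single_of_mem (n / 4)
      (by simp only [Finset.mem_filter, Finset.mem_Ico]; omega) fun k hk hkm => ?_
    simp only [Finset.mem_filter, Finset.mem_Ico] at hk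
    rw [pb_sq_right_zero n (pb_pair_disj hm1 hm2 (by omega) (by omega)
      (fun h => hkm h.symm) (supp_dP n (n / 4)) (supp_bP n k))]
    simp
  rw [P1, P2, if_pos h4, pb_sub_right, pb_sq_right_zero n (pb_self n _),
    pb_sq_right, pb_sq_right, pb_db hm1 hm2, pb_dc hm1 hm2,
    omg_quarter h4 (by omega), show ((2 : ℝ) / 32) = 1 / 16 by norm_num]
  simp only [MvPolynomial.C_mul, map_ofNat]
  ring


lemma pb_eP_QQ {n j : ℕ} (hj1 : 1 ≤ j) (hj4 : 4 * j < n) (hev : 2 ∣ n) :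
    pb n (bP n j - bP n (n / 2 - j)) (QQ n j) = 0 := by
  have hj2 : 2 * j < n := by omega
  have hj'1 : 1 ≤ n / 2 - j := by omega
  have hj'2 : 2 * (n / 2 - j) < n := by omega
  unfold QQ
  rw [pb_add_right, pb_add_right, pb_C_mul_right, pb_C_mul_right, pb_C_mul_right,
    pb_sq_right_zero n (show pb n (bP n j - bP n (n / 2 - j)) (bP n j) = 0 by
      rw [pb_sub_left, pb_self, pb_bP_bP hj'1 hj'2 hj1 hj2]; ring),
    pb_sq_right_zero n (show pb n (bP n j - bP n (n / 2 - j)) (bP n (n / 2 - j)) = 0 by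
      rw [pb_sub_left, pb_bP_bP hj1 hj2 hj'1 hj'2, pb_self]; ring),
    pb_eP_Gterm' hj1 hj4 hev]
  simp

lemma pb_QQ_Hbar4 {n j : ℕ} (hn : 4 ≤ n) (hev : 2 ∣ n) (hj1 : 1 ≤ j)
    (hj4 : 4 * j < n) (β : ℝ) : pb n (QQ n j) (Hbar4 n β) = 0 := by
  have hj2 : 2 * j < n := by omega
  have hj'1 : 1 ≤ n / 2 - j := by omega
  have hj'2 : 2 * (n / 2 - j) < n := by omega
  have hne : j ≠ n / 2 - j := by omega
  have hne' : n / 2 - j ≠ j := by omega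
  have D : ∀ X Y : MP, IsGen n j X → IsGen n (n / 2 - j) Y → pb n X Y = 0 :=
    fun X Y hX hY => pb_pair_disj hj1 hj2 hj'1 hj'2 hne (supp_gen hX) (supp_gen hY)
  have D' : ∀ X Y : MP, IsGen n (n / 2 - j) X → IsGen n j Y → pb n X Y = 0 :=
    fun X Y hX hY => pb_pair_disj hj'1 hj'2 hj1 hj2 hne' (supp_gen hX) (supp_gen hY)
  have hA : ∀ k, 1 ≤ k → 2 * k < n → pb n (QQ n j) (aP n k) = 0 := by
    intro k hk1 hk2
    unfold QQ
    rw [pb_add_left, pb_add_left, pb_C_mul_left, pb_C_mul_left, pb_C_mul_left,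
      pb_sq_left_zero n (pb_gen_aP hj1 hj2 hk1 hk2 (isGen_b n j)),
      pb_sq_left_zero n (pb_gen_aP hj'1 hj'2 hk1 hk2 (isGen_b n (n / 2 - j))),
      pb_sub_left,
      pb_mul_left_zero n (pb_gen_aP hj1 hj2 hk1 hk2 (isGen_c n j))
        (pb_gen_aP hj'1 hj'2 hk1 hk2 (isGen_c n (n / 2 - j))),
      pb_mul_left_zero n (pb_gen_aP hj1 hj2 hk1 hk2 (isGen_d n j))
        (pb_gen_aP hj'1 hj'2 hk1 hk2 (isGen_d n (n / 2 - j)))]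
    simp
  have hH : pb n (QQ n j) (aHalf n) = 0 := by
    unfold QQ
    rw [pb_add_left, pb_add_left, pb_C_mul_left, pb_C_mul_left, pb_C_mul_left,
      pb_sq_left_zero n (pb_gen_aHalf hev hj1 hj2 (isGen_b n j)),
      pb_sq_left_zero n (pb_gen_aHalf hev hj'1 hj'2 (isGen_b n (n / 2 - j))),
      pb_sub_left,
      pb_mul_left_zero n (pb_gen_aHalf hev hj1 hj2 (isGen_c n j))
        (pb_gen_aHalf hev hj'1 hj'2 (isGen_c n (n / 2 - j))),
      pb_mul_left_zero n (pb_gen_aHalf hev hj1 hj2 (isGen_d n j))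
        (pb_gen_aHalf hev hj'1 hj'2 (isGen_d n (n / 2 - j)))]
    simp
  have Hb : pb n (QQ n j) (bP n j) = MvPolynomial.C (4 * omg n (2 * j) ^ 2) *
      ((-(MvPolynomial.C 2 * dP n j)) * cP n (n / 2 - j)
        - (MvPolynomial.C 2 * cP n j) * dP n (n / 2 - j)) := by
    unfold QQ
    rw [pb_add_left, pb_add_left, pb_C_mul_left, pb_C_mul_left, pb_C_mul_left,
      pb_sq_left_zero n (pb_self n (bP n j)),
      pb_sq_left_zero n (pb_bP_bP hj'1 hj'2 hj1 hj2),
      pb_sub_left, pb_mul_left, pb_mul_left,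
      pb_cb hj1 hj2, D' _ _ (isGen_c n (n / 2 - j)) (isGen_b n j),
      pb_db hj1 hj2, D' _ _ (isGen_d n (n / 2 - j)) (isGen_b n j)]
    ring
  have Hb' : pb n (QQ n j) (bP n (n / 2 - j)) = MvPolynomial.C (4 * omg n (2 * j) ^ 2) *
      (cP n j * (-(MvPolynomial.C 2 * dP n (n / 2 - j)))
        - dP n j * (MvPolynomial.C 2 * cP n (n / 2 - j))) := by
    unfold QQ
    rw [pb_add_left, pb_add_left, pb_C_mul_left, pb_C_mul_left, pb_C_mul_left,
      pb_sq_left_zero n (pb_bP_bP hj1 hj2 hj'1 hj'2),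
      pb_sq_left_zero n (pb_self n (bP n (n / 2 - j))),
      pb_sub_left, pb_mul_left, pb_mul_left,
      D _ _ (isGen_c n j) (isGen_b n (n / 2 - j)), pb_cb hj'1 hj'2,
      D _ _ (isGen_d n j) (isGen_b n (n / 2 - j)), pb_db hj'1 hj'2]
    ring
  have Hd : pb n (QQ n j) (dP n j) = MvPolynomial.C (omg n j ^ 2) *
      ((-(MvPolynomial.C 2 * cP n j)) * bP n j + bP n j * (-(MvPolynomial.C 2 * cP n j)))
      + MvPolynomial.C (4 * omg n (2 * j) ^ 2) *
          ((MvPolynomial.C 2 * bP n j) * cP n (n / 2 - j)) := by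
    unfold QQ
    rw [pb_add_left, pb_add_left, pb_C_mul_left, pb_C_mul_left, pb_C_mul_left,
      pb_sq_left n (bP n j) (dP n j), pb_bd hj1 hj2,
      pb_sq_left_zero n (D' _ _ (isGen_b n (n / 2 - j)) (isGen_d n j)),
      pb_sub_left, pb_mul_left, pb_mul_left,
      pb_cd hj1 hj2, D' _ _ (isGen_c n (n / 2 - j)) (isGen_d n j),
      pb_self n (dP n j), D' _ _ (isGen_d n (n / 2 - j)) (isGen_d n j)]
    ring
  have Hd' : pb n (QQ n j) (dP n (n / 2 - j)) = MvPolynomial.C (omg n (n / 2 - j) ^ 2) *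
      ((-(MvPolynomial.C 2 * cP n (n / 2 - j))) * bP n (n / 2 - j)
        + bP n (n / 2 - j) * (-(MvPolynomial.C 2 * cP n (n / 2 - j))))
      + MvPolynomial.C (4 * omg n (2 * j) ^ 2) *
          (cP n j * (MvPolynomial.C 2 * bP n (n / 2 - j))) := by
    unfold QQ
    rw [pb_add_left, pb_add_left, pb_C_mul_left, pb_C_mul_left, pb_C_mul_left,
      pb_sq_left_zero n (D _ _ (isGen_b n j) (isGen_d n (n / 2 - j))),
      pb_sq_left n (bP n (n / 2 - j)) (dP n (n / 2 - j)), pb_bd hj'1 hj'2,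
      pb_sub_left, pb_mul_left, pb_mul_left,
      D _ _ (isGen_c n j) (isGen_d n (n / 2 - j)), pb_cd hj'1 hj'2,
      D _ _ (isGen_d n j) (isGen_d n (n / 2 - j)), pb_self n (dP n (n / 2 - j))]
    ring
  have Hc : pb n (QQ n j) (cP n j) = MvPolynomial.C (omg n j ^ 2) *
      ((MvPolynomial.C 2 * dP n j) * bP n j + bP n j * (MvPolynomial.C 2 * dP n j))
      + MvPolynomial.C (4 * omg n (2 * j) ^ 2) *
          (-((-(MvPolynomial.C 2 * bP n j)) * dP n (n / 2 - j))) := by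
    unfold QQ
    rw [pb_add_left, pb_add_left, pb_C_mul_left, pb_C_mul_left, pb_C_mul_left,
      pb_sq_left n (bP n j) (cP n j), pb_bc hj1 hj2,
      pb_sq_left_zero n (D' _ _ (isGen_b n (n / 2 - j)) (isGen_c n j)),
      pb_sub_left, pb_mul_left, pb_mul_left,
      pb_self n (cP n j), D' _ _ (isGen_c n (n / 2 - j)) (isGen_c n j),
      pb_dc hj1 hj2, D' _ _ (isGen_d n (n / 2 - j)) (isGen_c n j)]
    ring
  have Hc' : pb n (QQ n j) (cP n (n / 2 - j)) = MvPolynomial.C (omg n (n / 2 - j) ^ 2) *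
      ((MvPolynomial.C 2 * dP n (n / 2 - j)) * bP n (n / 2 - j)
        + bP n (n / 2 - j) * (MvPolynomial.C 2 * dP n (n / 2 - j)))
      + MvPolynomial.C (4 * omg n (2 * j) ^ 2) *
          (-(dP n j * (-(MvPolynomial.C 2 * bP n (n / 2 - j))))) := by
    unfold QQ
    rw [pb_add_left, pb_add_left, pb_C_mul_left, pb_C_mul_left, pb_C_mul_left,
      pb_sq_left_zero n (D _ _ (isGen_b n j) (isGen_c n (n / 2 - j))),
      pb_sq_left n (bP n (n / 2 - j)) (cP n (n / 2 - j)), pb_bc hj'1 hj'2,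
      pb_sub_left, pb_mul_left, pb_mul_left,
      D _ _ (isGen_c n j) (isGen_c n (n / 2 - j)), pb_self n (cP n (n / 2 - j)),
      D _ _ (isGen_d n j) (isGen_c n (n / 2 - j)), pb_dc hj'1 hj'2]
    ring
  rw [pb_Hbar4_reduce n β _ hA hH]
  have P1 : ∑ k ∈ (Finset.Ico 1 n).filter (fun k => 2 * k < n),
      MvPolynomial.C (omg n k ^ 2 / 32) * (0 - pb n (QQ n j) (bP n k ^ 2)) =
      MvPolynomial.C (omg n j ^ 2 / 32) * (0 - pb n (QQ n j) (bP n j ^ 2))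
      + MvPolynomial.C (omg n (n / 2 - j) ^ 2 / 32) *
          (0 - pb n (QQ n j) (bP n (n / 2 - j) ^ 2)) := by
    rw [← Finset.sum_subset (s₁ := ({j, n / 2 - j} : Finset ℕ))
      (by intro x hx
          simp only [Finset.mem_insert, Finset.mem_singleton] at hx
          simp only [Finset.mem_filter, Finset.mem_Ico]
          omega)
      (by intro k hk hknot
          simp only [Finset.mem_filter, Finset.mem_Ico] at hk
          simp only [Finset.mem_insert, Finset.mem_singleton, not_or] at hknot
          rw [pb_sq_right_zero n (pb_disj (supp_QQ hj1 hj4 hev) (supp_bP n k)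
            (by intro x hx
                simp only [Finset.mem_insert, Finset.mem_singleton] at hx ⊢
                omega))]
          simp), Finset.sum_pair hne]
  have P2 : ∑ k ∈ (Finset.Ico 1 n).filter (fun k => 4 * k < n),
      MvPolynomial.C (omg n (2 * k) ^ 2) *
        pb n (QQ n j) (dP n k * dP n (n / 2 - k) - cP n k * cP n (n / 2 - k)) =
      MvPolynomial.C (omg n (2 * j) ^ 2) *
        pb n (QQ n j) (dP n j * dP n (n / 2 - j) - cP n j * cP n (n / 2 - j)) := by
    refine Finset.sum_eq_single_of_mem j
      (by simp only [Finset.mem_filter, Finset.mem_Ico]; omega) fun k hk hkj => ?_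
    simp only [Finset.mem_filter, Finset.mem_Ico] at hk
    rw [pb_disj (supp_QQ hj1 hj4 hev) (supp_Gterm (by omega) (by omega) hev)
      (by intro x hx
          simp only [Finset.mem_insert, Finset.mem_singleton] at hx ⊢
          omega), mul_zero]
  have P3 : (if 4 ∣ n then MvPolynomial.C (1 / 16 : ℝ) *
      pb n (QQ n j) (dP n (n / 4) ^ 2 - cP n (n / 4) ^ 2) else 0) = (0 : MP) := by
    split_ifs with h4
    · rw [pb_disj (supp_QQ hj1 hj4 hev) (supp_T6 n)
        (by intro x hx
            simp only [Finset.mem_insert, Finset.mem_singleton] at hx ⊢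
            omega), mul_zero]
    · rfl
  rw [P1, P2, P3, pb_sq_right n (QQ n j) (bP n j), pb_sq_right n (QQ n j) (bP n (n / 2 - j)),
    Hb, Hb', pb_sub_right, pb_mul_right, pb_mul_right, Hd, Hd', Hc, Hc',
    show (omg n j ^ 2 / 32 : ℝ) = omg n j ^ 2 * (1 / 32) by ring,
    show (omg n (n / 2 - j) ^ 2 / 32 : ℝ) = omg n (n / 2 - j) ^ 2 * (1 / 32) by ring,
    show (1 / 8 : ℝ) = 4 * (1 / 32) by norm_num]
  simp only [MvPolynomial.C_mul, map_ofNat]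
  ring


/-! ### remaining pairwise brackets -/

lemma pb_aE_eP {n m j : ℕ} (hev : 2 ∣ n) (hm1 : 1 ≤ m) (hm2 : 2 * m ≤ n)
    (hj1 : 1 ≤ j) (hj4 : 4 * j < n) :
    pb n (aE n m) (bP n j - bP n (n / 2 - j)) = 0 := by
  rw [pb_sub_right, pb_aE_gen hev hm1 hm2 hj1 (by omega) (isGen_b n j),
    pb_aE_gen hev hm1 hm2 (by omega) (by omega) (isGen_b n (n / 2 - j))]
  simp

lemma pb_aE_QQ {n m j : ℕ} (hev : 2 ∣ n) (hm1 : 1 ≤ m) (hm2 : 2 * m ≤ n)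
    (hj1 : 1 ≤ j) (hj4 : 4 * j < n) : pb n (aE n m) (QQ n j) = 0 := by
  have hj2 : 2 * j < n := by omega
  have hj'1 : 1 ≤ n / 2 - j := by omega
  have hj'2 : 2 * (n / 2 - j) < n := by omega
  unfold QQ
  rw [pb_add_right, pb_add_right, pb_C_mul_right, pb_C_mul_right, pb_C_mul_right,
    pb_sq_right_zero n (pb_aE_gen hev hm1 hm2 hj1 hj2 (isGen_b n j)),
    pb_sq_right_zero n (pb_aE_gen hev hm1 hm2 hj'1 hj'2 (isGen_b n (n / 2 - j))),
    pb_sub_right,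
    pb_mul_right_zero n (pb_aE_gen hev hm1 hm2 hj1 hj2 (isGen_c n j))
      (pb_aE_gen hev hm1 hm2 hj'1 hj'2 (isGen_c n (n / 2 - j))),
    pb_mul_right_zero n (pb_aE_gen hev hm1 hm2 hj1 hj2 (isGen_d n j))
      (pb_aE_gen hev hm1 hm2 hj'1 hj'2 (isGen_d n (n / 2 - j)))]
  simp

lemma pb_eP_eP {n j l : ℕ} (hev : 2 ∣ n) (hj1 : 1 ≤ j) (hj4 : 4 * j < n)
    (hl1 : 1 ≤ l) (hl4 : 4 * l < n) :
    pb n (bP n j - bP n (n / 2 - j)) (bP n l - bP n (n / 2 - l)) = 0 := by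
  by_cases hjl : j = l
  · subst hjl; exact pb_self n _
  · exact pb_disj (supp_eP hj1 hj4 hev) (supp_eP hl1 hl4 hev)
      (by intro x hx
          simp only [Finset.mem_insert, Finset.mem_singleton] at hx ⊢
          omega)

lemma pb_eP_dQ {n j : ℕ} (hev : 2 ∣ n) (h4 : 4 ∣ n) (hj1 : 1 ≤ j) (hj4 : 4 * j < n) :
    pb n (bP n j - bP n (n / 2 - j)) (dP n (n / 4)) = 0 :=
  pb_disj (supp_eP hj1 hj4 hev) (supp_dP n (n / 4))
    (by intro x hx
        simp only [Finset.mem_insert, Finset.mem_singleton] at hx ⊢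
        omega)

lemma pb_eP_QQ' {n j l : ℕ} (hev : 2 ∣ n) (hj1 : 1 ≤ j) (hj4 : 4 * j < n)
    (hl1 : 1 ≤ l) (hl4 : 4 * l < n) :
    pb n (bP n j - bP n (n / 2 - j)) (QQ n l) = 0 := by
  by_cases hjl : j = l
  · subst hjl; exact pb_eP_QQ hj1 hj4 hev
  · exact pb_disj (supp_eP hj1 hj4 hev) (supp_QQ hl1 hl4 hev)
      (by intro x hx
          simp only [Finset.mem_insert, Finset.mem_singleton] at hx ⊢
          omega)

lemma pb_dQ_QQ {n l : ℕ} (hev : 2 ∣ n) (h4 : 4 ∣ n) (hl1 : 1 ≤ l) (hl4 : 4 * l < n) :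
    pb n (dP n (n / 4)) (QQ n l) = 0 :=
  pb_disj (supp_dP n (n / 4)) (supp_QQ hl1 hl4 hev)
    (by intro x hx
        simp only [Finset.mem_insert, Finset.mem_singleton] at hx ⊢
        omega)

lemma pb_QQ_QQ {n j l : ℕ} (hev : 2 ∣ n) (hj1 : 1 ≤ j) (hj4 : 4 * j < n)
    (hl1 : 1 ≤ l) (hl4 : 4 * l < n) : pb n (QQ n j) (QQ n l) = 0 := by
  by_cases hjl : j = l
  · subst hjl; exact pb_self n _
  · exact pb_disj (supp_QQ hj1 hj4 hev) (supp_QQ hl1 hl4 hev)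
      (by intro x hx
          simp only [Finset.mem_insert, Finset.mem_singleton] at hx ⊢
          omega)

lemma pb_flip {n : ℕ} {f g : MP} (h : pb n f g = 0) : pb n g f = 0 := by
  rw [pb_antisymm, h, neg_zero]

end FPUProof


theorem even_beta_chain_liouville_integrable (n : ℕ) (hn : 4 ≤ n) (heven : 2 ∣ n)
    (β : ℝ) :
    (∀ f ∈ integrals n, ∀ g ∈ integrals n, pb n f g = 0) ∧
    (∀ f ∈ integrals n, pb n f (H2 n + Hbar4 n β) = 0) := by
  constructor
  · intro f hf g hg
    rcases hf with ((⟨m1, hm11, hm12, rfl⟩ | ⟨j1, hj11, hj12, rfl⟩) | ⟨h41, rfl⟩) |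
      ⟨j1, hj11, hj12, rfl⟩ <;>
    rcases hg with ((⟨m2, hm21, hm22, rfl⟩ | ⟨j2, hj21, hj22, rfl⟩) | ⟨h42, rfl⟩) |
      ⟨j2, hj21, hj22, rfl⟩
    · by_cases h2 : 2 * m2 = n
      · rw [show aE n m2 = aHalf n by unfold aE; rw [if_pos h2]]
        exact pb_aE_aHalf heven hm11 hm12
      · rw [show aE n m2 = aP n m2 by unfold aE; rw [if_neg h2]]
        exact pb_aE_gen heven hm11 hm12 hm21 (by omega) (isGen_a n m2)
    · exact pb_aE_eP heven hm11 hm12 hj21 hj22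
    · exact pb_aE_gen heven hm11 hm12 (by omega) (by omega) (isGen_d n (n / 4))
    · exact pb_aE_QQ heven hm11 hm12 hj21 hj22
    · exact pb_flip (pb_aE_eP heven hm21 hm22 hj11 hj12)
    · exact pb_eP_eP heven hj11 hj12 hj21 hj22
    · exact pb_eP_dQ heven h42 hj11 hj12
    · exact pb_eP_QQ' heven hj11 hj12 hj21 hj22
    · exact pb_flip (pb_aE_gen heven hm21 hm22 (by omega) (by omega) (isGen_d n (n / 4)))
    · exact pb_flip (pb_eP_dQ heven h41 hj21 hj22)
    · exact pb_self n _
    · exact pb_dQ_QQ heven h41 hj21 hj22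
    · exact pb_flip (pb_aE_QQ heven hm21 hm22 hj11 hj12)
    · exact pb_flip (pb_eP_QQ' heven hj21 hj22 hj11 hj12)
    · exact pb_flip (pb_dQ_QQ heven h42 hj11 hj12)
    · exact pb_QQ_QQ heven hj11 hj12 hj21 hj22
  · intro f hf
    rcases hf with ((⟨m, hm1, hm2, rfl⟩ | ⟨j, hj1, hj4, rfl⟩) | ⟨h4, rfl⟩) |
      ⟨j, hj1, hj4, rfl⟩
    · rw [pb_add_right, pb_aE_H2 hn heven hm1 hm2, pb_aE_Hbar4 hn heven hm1 hm2 β]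
      simp
    · rw [pb_add_right, pb_eP_H2 hj1 hj4 heven, pb_eP_Hbar4 hn heven hj1 hj4 β]
      simp
    · rw [pb_add_right, pb_d_H2 (show 1 ≤ n / 4 by omega) (show 2 * (n / 4) < n by omega),
        pb_dQ_Hbar4 hn heven h4 β]
      simp
    · rw [pb_add_right, pb_QQ_H2 hj1 hj4 heven, pb_QQ_Hbar4 hn heven hj1 hj4 β]
      simp
end

section
/- Let n ≥ 3 be odd, m := (n−1)/2, and ω_j := 2 sin(jπ/n) for 1 ≤ j ≤ m. Then the m × m real matrix A with diagonal entries A_{jj} = 3 ω_j² and off-diagonal entries A_{jk} = 4 ω_j ω_k (j ≠ k) is invertible (its determinant is nonzero). -/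
theorem kam_nondegeneracy_matrix_invertible (n : ℕ) (hn : 3 ≤ n) (hodd : Odd n) :
    (Matrix.of fun j k : Fin ((n - 1) / 2) =>
      if j = k then 3 * omg n (j.1 + 1) ^ 2
      else 4 * omg n (j.1 + 1) * omg n (k.1 + 1)).det ≠ 0 := by
  set m := (n - 1) / 2 with hm
  have hω : ∀ j : Fin m, omg n (j.1 + 1) ≠ 0 := by
    intro j
    have hj : j.1 + 1 ≤ m := j.2
    have hmlt : m < n := by omega
    have hn0 : (0:ℝ) < n := by positivity
    have h1 : (0:ℝ) < (j.1 + 1 : ℝ) * Real.pi / n := by positivity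
    have h2 : (j.1 + 1 : ℝ) * Real.pi / n < Real.pi := by
      rw [div_lt_iff₀ hn0]
      have : (j.1 + 1 : ℝ) < n := by exact_mod_cast by omega
      nlinarith [Real.pi_pos]
    have := Real.sin_pos_of_pos_of_lt_pi h1 h2
    unfold omg
    push_cast
    nlinarith
  set ω : Fin m → ℝ := fun j => omg n (j.1 + 1) with hωdef
  have key : (Matrix.of fun j k : Fin m =>
      if j = k then 3 * omg n (j.1 + 1) ^ 2
      else 4 * omg n (j.1 + 1) * omg n (k.1 + 1)) =
      Matrix.diagonal ω *
        (-(1 + Matrix.replicateCol Unit (fun _ : Fin m => (-4:ℝ)) *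
            Matrix.replicateRow Unit (fun _ : Fin m => (1:ℝ)))) * Matrix.diagonal ω := by
    have e1 : ∀ (B : Matrix (Fin m) (Fin m) ℝ) (j k : Fin m),
        (Matrix.diagonal ω * B * Matrix.diagonal ω) j k = ω j * B j k * ω k := by
      intro B j k
      rw [Matrix.mul_diagonal, Matrix.diagonal_mul]
    ext j k
    rw [e1]
    simp only [Matrix.of_apply, Matrix.neg_apply, Matrix.add_apply, Matrix.mul_apply,
      Matrix.one_apply, Matrix.replicateCol_apply, Matrix.replicateRow_apply, Finset.univ_unique,
      Finset.sum_singleton]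
    by_cases h : j = k
    · simp only [h, if_pos rfl, if_true]
      simp [hωdef]; ring
    · simp only [if_neg h, hωdef]
      ring
  rw [key]
  rw [Matrix.det_mul, Matrix.det_mul, Matrix.det_neg, Matrix.det_one_add_replicateCol_mul_replicateRow,
    Matrix.det_diagonal]
  have hprod : ∏ j, ω j ≠ 0 := Finset.prod_ne_zero_iff.mpr fun j _ => hω j
  have hm1 : 1 ≤ m := by omega
  have hne : (1 + dotProduct (fun _ : Fin m => (1:ℝ)) (fun _ : Fin m => (-4:ℝ))) ≠ 0 := by
    simp [dotProduct]
    have : (1:ℝ) ≤ m := by exact_mod_cast hm1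
    intro h
    nlinarith
  have hsign : ((-1:ℝ)) ^ Fintype.card (Fin m) ≠ 0 := by positivity
  exact mul_ne_zero (mul_ne_zero hprod (mul_ne_zero hsign hne)) hprod
end

section
/- Let p be a prime, k ≥ 1 an integer, and ζ := exp(2πi/p^k) ∈ ℂ. Let K ⊆ ℂ be a subfield generated over ℚ by roots of unity, and suppose ζ ∉ K and ζ^p ∈ K. Then the minimal polynomial of ζ over K is X^p − ζ^p if k ≥ 2, and X^{p-1} + X^{p-2} + ⋯ + X + 1 if k = 1. -/
/-!
STATEMENT 12: Let `p` be a prime, `k ≥ 1`, `ζ = exp(2πi/p^k)`, and `K ⊆ ℂ` a subfield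
generated over ℚ by roots of unity with `ζ ∉ K` and `ζ^p ∈ K`. Then the minimal
polynomial of `ζ` over `K` is `X^p − ζ^p` if `k ≥ 2` and `X^{p-1} + ⋯ + X + 1` if `k = 1`.
-/

open Polynomial IntermediateField Complex

lemma aux_pow_mem {K : IntermediateField ℚ ℂ} {ζ : ℂ} {N : ℕ} (hN : N ≠ 0)
    (hprim : IsPrimitiveRoot ζ N) {e : ℕ} (hcop : e.Coprime N) (h : ζ ^ e ∈ K) : ζ ∈ K := by
  haveI : NeZero N := ⟨hN⟩
  obtain ⟨s, -, hs⟩ := (hprim.pow_of_coprime e hcop).eq_pow_of_pow_eq_one hprim.pow_eq_one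
  rw [← hs]
  exact pow_mem h _

lemma aux_monic_dvd_eq {F : Type*} [Field F] {q g : F[X]} (hq : q.Monic) (hg : g.Monic)
    (hdvd : q ∣ g) (hle : g.natDegree ≤ q.natDegree) : q = g := by
  obtain ⟨c, rfl⟩ := hdvd
  have hc : c ≠ 0 := fun h => by simp [h] at hg
  have := natDegree_mul hq.ne_zero hc
  have hdc : c.natDegree = 0 := by omega
  have hcC : c = C (c.coeff 0) := eq_C_of_natDegree_eq_zero hdc
  rw [hcC] at hg ⊢
  have : c.coeff 0 = 1 := by
    have := hg.leadingCoeff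
    rwa [leadingCoeff_mul, hq.leadingCoeff, one_mul, leadingCoeff_C] at this
  simp [this]

lemma aux_integral (K : IntermediateField ℚ ℂ) {ζ : ℂ} {N : ℕ} (hN : N ≠ 0)
    (hprim : IsPrimitiveRoot ζ N) : IsIntegral K ζ := by
  refine ⟨X ^ N - C 1, ?_, ?_⟩
  · exact monic_X_pow_sub_C 1 hN
  · simp [hprim.pow_eq_one]

lemma case_two (p k : ℕ) (hp : p.Prime) (hk2 : 2 ≤ k) (ζ : ℂ)
    (hprim : IsPrimitiveRoot ζ (p ^ k)) (K : IntermediateField ℚ ℂ)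
    (hnot : ζ ∉ K) (hin : ζ ^ p ∈ K) :
    minpoly K ζ = X ^ p - C (⟨ζ ^ p, hin⟩ : K) := by
  have hpk0 : p ^ k ≠ 0 := pow_ne_zero _ hp.ne_zero
  have hζ0 : ζ ≠ 0 := hprim.ne_zero hpk0
  have hint : IsIntegral K ζ := aux_integral K hpk0 hprim
  have hdvd : minpoly K ζ ∣ X ^ p - C (⟨ζ ^ p, hin⟩ : K) := by
    apply minpoly.dvd
    simp [sub_eq_zero]
  have hmonicg : (X ^ p - C (⟨ζ ^ p, hin⟩ : K)).Monic := monic_X_pow_sub_C _ hp.ne_zero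
  have hdegg : (X ^ p - C (⟨ζ ^ p, hin⟩ : K)).natDegree = p := natDegree_X_pow_sub_C
  set q := minpoly K ζ with hqdef
  have hqmonic : q.Monic := minpoly.monic hint
  have hd_pos : 0 < q.natDegree := minpoly.natDegree_pos hint
  have hd_le : q.natDegree ≤ p := by
    have := natDegree_le_of_dvd hdvd hmonicg.ne_zero
    rwa [hdegg] at this
  have hdp : q.natDegree = p := by
    by_contra hne
    have hdlt : q.natDegree < p := lt_of_le_of_ne hd_le hne
    set d := q.natDegree with hddef
    -- work in ℂ
    set Q := q.map (algebraMap K ℂ) with hQdef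
    have hQm : Q.Monic := hqmonic.map _
    have hQsplits : Q.Splits := IsAlgClosed.splits Q
    have hQdeg : Q.natDegree = d := natDegree_map _
    have hcard : Multiset.card Q.roots = d := by
      rw [splits_iff_card_roots.mp hQsplits, hQdeg]
    have hroots_pow : ∀ r ∈ Q.roots, r ^ p = ζ ^ p := by
      intro r hr
      have hr' : Q.IsRoot r := (mem_roots hQm.ne_zero).mp hr
      have hQdvd : Q ∣ X ^ p - C (ζ ^ p) := by
        have := Polynomial.map_dvd (algebraMap K ℂ) hdvd
        rwa [Polynomial.map_sub, Polynomial.map_pow, map_X, map_C] at this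
      have : (X ^ p - C (ζ ^ p)).IsRoot r := hr'.dvd hQdvd
      simpa [sub_eq_zero] using this
    have hc0 : Q.coeff 0 = (-1) ^ d * Q.roots.prod :=
      (hQsplits.coeff_zero_eq_prod_roots_of_monic hQm).trans (by rw [hQdeg])
    have hprodpow : Q.roots.prod ^ p = (ζ ^ d) ^ p := by
      have h1 : Q.roots.prod ^ p = (Q.roots.map (fun r => r ^ p)).prod := by
        rw [Multiset.prod_map_pow (f := fun r : ℂ => r)]
        simp
      rw [h1, Multiset.map_congr rfl (fun r hr => hroots_pow r hr)]
      simp [Multiset.map_const', hcard]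
      ring
    haveI : NeZero p := ⟨hp.ne_zero⟩
    set P := Q.roots.prod with hPdef
    set ξ := ζ ^ p ^ (k - 1) with hxidef
    have hξprim : IsPrimitiveRoot ξ p :=
      hprim.pow (Nat.pos_of_ne_zero hpk0) (by rw [← pow_succ]; congr 1; omega)
    have hη : (P / ζ ^ d) ^ p = 1 := by
      rw [div_pow, hprodpow, div_self (pow_ne_zero _ (pow_ne_zero _ hζ0))]
    obtain ⟨t, -, ht⟩ := hξprim.eq_pow_of_pow_eq_one hη
    rw [eq_div_iff (pow_ne_zero _ hζ0)] at ht
    have hPeq : P = ζ ^ (p ^ (k - 1) * t + d) := by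
      rw [pow_add, pow_mul, ← hxidef]
      exact ht.symm
    have hwmem : ζ ^ (p ^ (k - 1) * t + d) ∈ K := by
      have hcoe : ζ ^ (p ^ (k - 1) * t + d) = (((-1) ^ d * q.coeff 0 : K) : ℂ) := by
        push_cast
        have : ((q.coeff 0 : K) : ℂ) = Q.coeff 0 := by rw [hQdef, coeff_map]; rfl
        rw [this, hc0, ← hPeq, ← mul_assoc, ← mul_pow]
        simp
      rw [hcoe]
      exact SetLike.coe_mem _
    have hpd : ¬ p ∣ (p ^ (k - 1) * t + d) := by
      intro hdvd
      have h1 : p ∣ p ^ (k - 1) * t :=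
        dvd_mul_of_dvd_left (dvd_pow_self p (by omega)) t
      have h2 : p ∣ d := (Nat.dvd_add_right h1).mp hdvd
      have := Nat.le_of_dvd hd_pos h2
      omega
    have cop : (p ^ (k - 1) * t + d).Coprime (p ^ k) :=
      Nat.Coprime.pow_right k (Nat.coprime_comm.mp (hp.coprime_iff_not_dvd.mpr hpd))
    exact hnot (aux_pow_mem hpk0 hprim cop hwmem)
  exact aux_monic_dvd_eq hqmonic hmonicg hdvd (by rw [hdegg, hdp])

lemma aux_int {F : Type*} [Field F] [Algebra F ℂ] {ζ : ℂ} {N : ℕ} (hN : N ≠ 0)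
    (h : ζ ^ N = 1) : IsIntegral F ζ :=
  ⟨X ^ N - C 1, monic_X_pow_sub_C 1 hN, by simp [h]⟩

lemma aux_adjoin_pair (n p : ℕ) (hn : n ≠ 0) (hp0 : p ≠ 0) (cop : Nat.Coprime n p)
    (ω : ℂ) (hω0 : ω ≠ 0) (ξ ζ : ℂ) (hξ : ξ = ω ^ p) (hζ : ζ = ω ^ n) :
    IntermediateField.adjoin ℚ ({ξ, ζ} : Set ℂ) = ℚ⟮ω⟯ := by
  apply le_antisymm
  · rw [adjoin_le_iff]
    intro x hx
    simp only [Set.mem_insert_iff, Set.mem_singleton_iff] at hx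
    rcases hx with rfl | rfl
    · rw [hξ]; exact pow_mem (mem_adjoin_simple_self ℚ ω) p
    · rw [hζ]; exact pow_mem (mem_adjoin_simple_self ℚ ω) n
  · rw [adjoin_simple_le_iff]
    have hbez : (n : ℤ) * Nat.gcdA n p + (p : ℤ) * Nat.gcdB n p = 1 := by
      have := Nat.gcd_eq_gcd_ab n p
      rw [cop] at this
      exact_mod_cast this.symm
    have key : ω = (ω ^ n) ^ (Nat.gcdA n p) * (ω ^ p) ^ (Nat.gcdB n p) := by
      rw [← zpow_natCast ω n, ← zpow_natCast ω p, ← zpow_mul, ← zpow_mul, ← zpow_add₀ hω0,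
        hbez, zpow_one]
    rw [key]
    have hξmem : ξ ∈ adjoin ℚ ({ξ, ζ} : Set ℂ) := subset_adjoin _ _ (by simp)
    have hζmem : ζ ∈ adjoin ℚ ({ξ, ζ} : Set ℂ) := subset_adjoin _ _ (by simp)
    rw [← hξ, ← hζ]
    exact mul_mem (zpow_mem hζmem _) (zpow_mem hξmem _)

open Module in
lemma aux_minpoly_deg (n p : ℕ) (hn : n ≠ 0) (hp : p.Prime) (cop : Nat.Coprime n p)
    (ω : ℂ) (hω : IsPrimitiveRoot ω (n * p)) (ξ ζ : ℂ) (hξ : ξ = ω ^ p) (hζ : ζ = ω ^ n) :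
    (minpoly ↥(ℚ⟮ξ⟯) ζ).natDegree = p - 1 := by
  have hnp0 : n * p ≠ 0 := mul_ne_zero hn hp.ne_zero
  have hnppos : 0 < n * p := Nat.pos_of_ne_zero hnp0
  have hω0 : ω ≠ 0 := hω.ne_zero hnp0
  have hξprim : IsPrimitiveRoot ξ n := hξ ▸ hω.pow hnppos (mul_comm n p)
  have hζprim : IsPrimitiveRoot ζ p := hζ ▸ hω.pow hnppos rfl
  have hξint : IsIntegral ℚ ξ := aux_int hn hξprim.pow_eq_one
  haveI : FiniteDimensional ℚ ℚ⟮ξ⟯ := adjoin.finiteDimensional hξint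
  have hζint : IsIntegral ↥(ℚ⟮ξ⟯) ζ := aux_int hp.ne_zero hζprim.pow_eq_one
  haveI : FiniteDimensional ↥(ℚ⟮ξ⟯) ↥(ℚ⟮ξ⟯⟮ζ⟯) := adjoin.finiteDimensional hζint
  have h1 : finrank ↥(ℚ⟮ξ⟯) ↥(ℚ⟮ξ⟯⟮ζ⟯) = (minpoly ↥(ℚ⟮ξ⟯) ζ).natDegree :=
    adjoin.finrank hζint
  have h2 : (ℚ⟮ξ⟯⟮ζ⟯).restrictScalars ℚ = ℚ⟮ω⟯ := by
    rw [show (ℚ⟮ξ⟯ : IntermediateField ℚ ℂ) = adjoin ℚ {ξ} from rfl]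
    erw [adjoin_adjoin_left, Set.singleton_union]
    exact aux_adjoin_pair n p hn hp.ne_zero cop ω hω0 ξ ζ hξ hζ
  have h4 : finrank ℚ ↥((ℚ⟮ξ⟯⟮ζ⟯).restrictScalars ℚ) = finrank ℚ ↥(ℚ⟮ξ⟯⟮ζ⟯) := rfl
  have hωint : IsIntegral ℚ ω := aux_int hnp0 hω.pow_eq_one
  have hωrank : finrank ℚ ↥(ℚ⟮ω⟯) = (n * p).totient := by
    rw [adjoin.finrank hωint, ← cyclotomic_eq_minpoly_rat hω hnppos, natDegree_cyclotomic]
  have hLrank : finrank ℚ ↥(ℚ⟮ξ⟯) = n.totient := by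
    rw [adjoin.finrank hξint, ← cyclotomic_eq_minpoly_rat hξprim (Nat.pos_of_ne_zero hn),
      natDegree_cyclotomic]
  have tower : finrank ℚ ↥(ℚ⟮ξ⟯) * finrank ↥(ℚ⟮ξ⟯) ↥(ℚ⟮ξ⟯⟮ζ⟯) = finrank ℚ ↥(ℚ⟮ξ⟯⟮ζ⟯) :=
    Module.finrank_mul_finrank ℚ ↥(ℚ⟮ξ⟯) ↥(ℚ⟮ξ⟯⟮ζ⟯)
  rw [hLrank, h1, ← h4, h2, hωrank, Nat.totient_mul cop, Nat.totient_prime hp] at tower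
  exact Nat.eq_of_mul_eq_mul_left (Nat.totient_pos.mpr (Nat.pos_of_ne_zero hn)) tower

lemma case_one (p : ℕ) (hp : p.Prime) (ζ : ℂ)
    (hζe : ζ = Complex.exp (2 * Real.pi * Complex.I / p))
    (S : Set ℂ) (hS : ∀ z ∈ S, ∃ m : ℕ, 0 < m ∧ z ^ m = 1)
    (hnot : ζ ∉ IntermediateField.adjoin ℚ S) :
    minpoly ↥(IntermediateField.adjoin ℚ S) ζ =
      cyclotomic p ↥(IntermediateField.adjoin ℚ S) := by
  classical
  haveI : Fact p.Prime := ⟨hp⟩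
  have hp0 : p ≠ 0 := hp.ne_zero
  haveI : NeZero p := ⟨hp0⟩
  have hprim : IsPrimitiveRoot ζ p := by
    rw [hζe]; exact Complex.isPrimitiveRoot_exp p hp0
  set K := IntermediateField.adjoin ℚ S with hKdef
  have hint : IsIntegral ↥K ζ := aux_int hp0 hprim.pow_eq_one
  have hdvd : minpoly ↥K ζ ∣ cyclotomic p ↥K := by
    apply minpoly.dvd
    rw [aeval_def, ← eval_map, map_cyclotomic]
    exact hprim.isRoot_cyclotomic hp.pos
  have hcyc_deg : (cyclotomic p ↥K).natDegree = p - 1 := by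
    rw [natDegree_cyclotomic, Nat.totient_prime hp]
  set q := minpoly ↥K ζ with hqdef
  set d := q.natDegree with hddef
  suffices hle : p - 1 ≤ d by
    exact aux_monic_dvd_eq (minpoly.monic hint) (cyclotomic.monic p ↥K) hdvd
      (by rw [hcyc_deg]; exact hle)
  -- find finite set of roots of unity generating the coefficients
  have hex : ∀ i : ℕ, ∃ Ti : Finset ℂ, ↑Ti ⊆ S ∧
      ((q.coeff i : ℂ)) ∈ IntermediateField.adjoin ℚ (↑Ti : Set ℂ) := fun i =>
    exists_finset_of_mem_adjoin (SetLike.coe_mem (q.coeff i))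
  choose Tf hTfS hTfmem using hex
  set T : Finset ℂ := (Finset.range (d + 1)).biUnion Tf with hTdef
  have hTS : (↑T : Set ℂ) ⊆ S := by
    intro z hz
    rw [Finset.coe_biUnion] at hz
    obtain ⟨i, -, hi⟩ := Set.mem_iUnion₂.mp hz
    exact hTfS i hi
  have horder : ∀ z ∈ T, 0 < orderOf z := by
    intro z hz
    obtain ⟨m, hm, hzm⟩ := hS z (hTS hz)
    exact orderOf_pos_iff.mpr (isOfFinOrder_iff_pow_eq_one.mpr ⟨m, hm, hzm⟩)
  set n : ℕ := ∏ z ∈ T, orderOf z with hndef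
  have hn0 : n ≠ 0 := by
    rw [hndef]
    exact Finset.prod_ne_zero_iff.mpr fun z hz => (horder z hz).ne'
  haveI : NeZero n := ⟨hn0⟩
  have hpn : ¬ p ∣ n := by
    intro hdvdn
    obtain ⟨z, hzT, hpz⟩ := (Nat.Prime.prime hp).exists_mem_finset_dvd hdvdn
    have hy : IsPrimitiveRoot (z ^ (orderOf z / p)) p :=
      (IsPrimitiveRoot.orderOf z).pow (horder z hzT) (Nat.div_mul_cancel hpz).symm
    obtain ⟨j, -, hj⟩ := hy.eq_pow_of_pow_eq_one hprim.pow_eq_one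
    apply hnot
    rw [← hj]
    exact pow_mem (pow_mem (IntermediateField.subset_adjoin ℚ S (hTS hzT)) _) _
  have hzn : ∀ z ∈ T, z ^ n = 1 := fun z hz =>
    orderOf_dvd_iff_pow_eq_one.mp (Finset.dvd_prod_of_mem _ hz)
  -- the cyclotomic field containing the coefficients
  set ω : ℂ := Complex.exp (2 * Real.pi * Complex.I / (↑(n * p) : ℂ)) with hωdef
  have hω : IsPrimitiveRoot ω (n * p) := Complex.isPrimitiveRoot_exp _ (mul_ne_zero hn0 hp0)
  set ξ : ℂ := ω ^ p with hξdef
  have hζω : ζ = ω ^ n := by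
    rw [hζe, hωdef, ← Complex.exp_nat_mul]
    congr 1
    have hnne : (n : ℂ) ≠ 0 := Nat.cast_ne_zero.mpr hn0
    have hpne : (p : ℂ) ≠ 0 := Nat.cast_ne_zero.mpr hp0
    push_cast
    field_simp
  have hξprim : IsPrimitiveRoot ξ n :=
    hω.pow (Nat.pos_of_ne_zero (mul_ne_zero hn0 hp0)) (mul_comm n p)
  have hTL : ∀ z ∈ T, z ∈ ℚ⟮ξ⟯ := by
    intro z hz
    obtain ⟨i, -, hi⟩ := hξprim.eq_pow_of_pow_eq_one (hzn z hz)
    rw [← hi]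
    exact pow_mem (IntermediateField.mem_adjoin_simple_self ℚ ξ) _
  have hadjT : IntermediateField.adjoin ℚ (↑T : Set ℂ) ≤ ℚ⟮ξ⟯ :=
    IntermediateField.adjoin_le_iff.mpr hTL
  have hcoeffL : ∀ i, i ≤ d → ((q.coeff i : ℂ)) ∈ ℚ⟮ξ⟯ := by
    intro i hi
    apply hadjT
    apply IntermediateField.adjoin.mono ℚ _ _ _ (hTfmem i)
    intro z hz
    rw [Finset.coe_biUnion]
    exact Set.mem_iUnion₂.mpr ⟨i, Finset.mem_range.mpr (by omega), hz⟩
  set f : ℕ → ↥(ℚ⟮ξ⟯) := fun i =>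
    if h : i ≤ d then ⟨(q.coeff i : ℂ), hcoeffL i h⟩ else 0 with hfdef
  set q' : (↥(ℚ⟮ξ⟯))[X] := ∑ i ∈ Finset.range (d + 1), C (f i) * X ^ i with hq'def
  have hfcoe : ∀ i, i ≤ d → ((f i : ℂ)) = (q.coeff i : ℂ) := by
    intro i h
    rw [hfdef]
    beta_reduce
    rw [dif_pos h]
  have hfzero : ∀ i, ¬ i ≤ d → f i = 0 := by
    intro i h
    rw [hfdef]
    beta_reduce
    rw [dif_neg h]
  have hq'coeff : ∀ j, q'.coeff j = f j := by
    intro j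
    rw [hq'def, finset_sum_coeff]
    simp only [coeff_C_mul, coeff_X_pow, mul_ite, mul_one, mul_zero]
    rw [Finset.sum_ite_eq (Finset.range (d + 1)) j f]
    split
    · rfl
    · next h =>
      rw [hfdef]
      have : ¬ j ≤ d := by
        intro hj
        exact h (Finset.mem_range.mpr (by omega))
      simp [this]
  have haeval : (aeval ζ) q' = 0 := by
    have e1 : (aeval ζ) q' = ∑ i ∈ Finset.range (d + 1), ((f i : ℂ)) * ζ ^ i := by
      rw [hq'def, map_sum]
      apply Finset.sum_congr rfl
      intro i _
      rw [map_mul, map_pow, aeval_X, aeval_C]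
      rfl
    have e2 : ∑ i ∈ Finset.range (d + 1), ((q.coeff i : ℂ)) * ζ ^ i = 0 := by
      have h0 := minpoly.aeval ↥K ζ
      rw [aeval_eq_sum_range' (n := d + 1) (by rw [← hqdef, ← hddef]; omega) ζ] at h0
      rw [← h0, ← hqdef]
      apply Finset.sum_congr rfl
      intro i _
      rw [Algebra.smul_def]
      rfl
    rw [e1, ← e2]
    apply Finset.sum_congr rfl
    intro i hi
    have hid : i ≤ d := by
      have := Finset.mem_range.mp hi
      omega
    congr 1
    exact hfcoe i hid
  have hne : q' ≠ 0 := by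
    intro h
    have hcd : q'.coeff d = f d := hq'coeff d
    rw [h, coeff_zero] at hcd
    have : ((f d : ℂ)) = 1 := by
      rw [hfcoe d (le_refl d)]
      have : q.coeff d = 1 := by
        have hm := (minpoly.monic hint).leadingCoeff
        rwa [leadingCoeff] at hm
      rw [this]
      rfl
    rw [← hcd] at this
    simp at this
  have hdeg' : q'.natDegree ≤ d := by
    apply natDegree_le_iff_coeff_eq_zero.mpr
    intro N hN
    rw [hq'coeff N, hfzero N (by omega)]
  have hminLdeg : (minpoly ↥(ℚ⟮ξ⟯) ζ).natDegree ≤ d :=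
    le_trans (natDegree_le_of_dvd (minpoly.dvd _ _ haeval) hne) hdeg'
  have hkey : (minpoly ↥(ℚ⟮ξ⟯) ζ).natDegree = p - 1 :=
    aux_minpoly_deg n p hn0 hp
      (Nat.coprime_comm.mp (hp.coprime_iff_not_dvd.mpr hpn)) ω hω ξ ζ hξdef hζω
  omega

theorem minpoly_of_prime_power_root_of_unity
    (p k : ℕ) (hp : p.Prime) (hk : 1 ≤ k)
    (ζ : ℂ) (hζ : ζ = Complex.exp (2 * Real.pi * Complex.I / (p : ℂ) ^ k))
    (K : IntermediateField ℚ ℂ) (S : Set ℂ)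
    (hS : ∀ z ∈ S, ∃ m : ℕ, 0 < m ∧ z ^ m = 1)
    (hKS : K = IntermediateField.adjoin ℚ S)
    (hnot : ζ ∉ K) (hin : ζ ^ p ∈ K) :
    minpoly K ζ =
      (if 2 ≤ k then
        Polynomial.X ^ p - Polynomial.C (⟨ζ ^ p, hin⟩ : K)
      else
        ∑ i ∈ Finset.range p, Polynomial.X ^ i) := by
  have hpk0 : p ^ k ≠ 0 := pow_ne_zero _ hp.ne_zero
  have hprim : IsPrimitiveRoot ζ (p ^ k) := by
    rw [hζ, show ((p : ℂ)) ^ k = ((p ^ k : ℕ) : ℂ) by push_cast; ring]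
    exact Complex.isPrimitiveRoot_exp (p ^ k) hpk0
  by_cases h2 : 2 ≤ k
  · rw [if_pos h2]
    exact case_two p k hp h2 ζ hprim K hnot hin
  · have hk1 : k = 1 := by omega
    rw [if_neg h2]
    haveI : Fact p.Prime := ⟨hp⟩
    subst hKS
    rw [← cyclotomic_prime ↥(IntermediateField.adjoin ℚ S) p]
    exact case_one p hp ζ (by rw [hζ, hk1, pow_one]) S hS hnot
end

section
/- Let N ≥ 2 and let ζ_1, …, ζ_N be roots of unity with ζ_1 + ⋯ + ζ_N = 0 and with no vanishing proper subsum. Let M be the least positive integer such that (ζ_i/ζ_j)^M = 1 for all 1 ≤ i, j ≤ N. Then M is squarefree, and every prime p dividing M satisfies p ≤ N. -/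
open Polynomial Finset

private lemma geom_aux {q : ℕ} {w : ℂ} (hw : IsPrimitiveRoot w q) (k : ℕ) :
    ∑ s ∈ Finset.range q, w ^ (k * s) = if q ∣ k then (q : ℂ) else 0 := by
  have h1 : ∀ s, w ^ (k * s) = (w ^ k) ^ s := fun s => by rw [pow_mul]
  simp_rw [h1]
  by_cases h : q ∣ k
  · have hwk : w ^ k = 1 := (hw.pow_eq_one_iff_dvd k).mpr h
    simp [hwk, h]
  · have hne : w ^ k ≠ 1 := fun hc => h ((hw.pow_eq_one_iff_dvd k).mp hc)
    rw [geom_sum_eq hne]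
    have hqq : (w ^ k) ^ q = 1 := by
      rw [← pow_mul, mul_comm, pow_mul, hw.pow_eq_one, one_pow]
    simp [hqq, h]

private lemma transfer {M : ℕ} (hM : 0 < M) {γ : ℂ} (hγ : IsPrimitiveRoot γ M)
    {u : ℕ} (hu : Nat.Coprime u M) {ι : Type*} [Fintype ι] (t : ι → ℕ)
    (h : ∑ i, γ ^ (t i) = 0) : ∑ i, γ ^ (u * t i) = 0 := by
  set P : ℚ[X] := ∑ i, (X : ℚ[X]) ^ (t i) with hP
  have hroot : aeval γ P = 0 := by
    rw [hP, map_sum]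
    simpa using h
  have hdvd : minpoly ℚ γ ∣ P := minpoly.dvd ℚ γ hroot
  rw [← Polynomial.cyclotomic_eq_minpoly_rat hγ hM] at hdvd
  obtain ⟨R, hR⟩ := hdvd
  have hprim : IsPrimitiveRoot (γ ^ u) M := hγ.pow_of_coprime u hu
  have hcyc : aeval (γ ^ u) (Polynomial.cyclotomic M ℚ) = 0 := by
    have h2 := hprim.isRoot_cyclotomic hM
    rw [Polynomial.IsRoot] at h2
    rw [Polynomial.aeval_def, ← Polynomial.eval_map, Polynomial.map_cyclotomic]
    exact h2
  have hz : aeval (γ ^ u) P = 0 := by rw [hR, map_mul, hcyc, zero_mul]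
  rw [hP, map_sum] at hz
  simpa [← pow_mul] using hz

/-!
STATEMENT 13: Let `N ≥ 2` and let `ζ_1, …, ζ_N` be roots of unity with zero sum and
no vanishing proper subsum. If `M` is the least positive integer such that
`(ζ_i/ζ_j)^M = 1` for all `i, j`, then `M` is squarefree and every prime `p ∣ M`
satisfies `p ≤ N`.
-/

theorem squarefree_and_small_primes_of_minimal_order
    (N : ℕ) (hN : 2 ≤ N) (ζ : Fin N → ℂ)
    (hru : ∀ i, ∃ m : ℕ, 0 < m ∧ ζ i ^ m = 1)
    (hsum : ∑ i, ζ i = 0)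
    (hsub : ∀ I : Finset (Fin N), I.Nonempty → I ≠ Finset.univ → ∑ i ∈ I, ζ i ≠ 0)
    (M : ℕ) (hMpos : 0 < M)
    (hM : ∀ i j, (ζ i / ζ j) ^ M = 1)
    (hMmin : ∀ M' : ℕ, 0 < M' → (∀ i j, (ζ i / ζ j) ^ M' = 1) → M ≤ M') :
    Squarefree M ∧ ∀ q : ℕ, q.Prime → q ∣ M → q ≤ N := by
  classical
  have hne : ∀ i, ζ i ≠ 0 := by
    intro i h0
    obtain ⟨m, hm, hmi⟩ := hru i
    rw [h0, zero_pow hm.ne'] at hmi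
    exact zero_ne_one hmi
  have hN0 : (0 : ℕ) < N := by omega
  set i0 : Fin N := ⟨0, hN0⟩ with hi0
  set η : Fin N → ℂ := fun i => ζ i / ζ i0 with hη
  have hηne : ∀ i, η i ≠ 0 := fun i => div_ne_zero (hne i) (hne i0)
  have hηM : ∀ i, η i ^ M = 1 := fun i => hM i i0
  obtain ⟨γ, hγ⟩ : ∃ γ : ℂ, IsPrimitiveRoot γ M :=
    ⟨_, Complex.isPrimitiveRoot_exp M hMpos.ne'⟩
  haveI : NeZero M := ⟨hMpos.ne'⟩
  have ht : ∀ i, ∃ k, γ ^ k = η i := by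
    intro i
    obtain ⟨k, _, hk⟩ := hγ.eq_pow_of_pow_eq_one (hηM i)
    exact ⟨k, hk⟩
  choose t htγ using ht
  have hsumη : ∑ i, η i = 0 := by
    simp only [hη, ← Finset.sum_div, hsum, zero_div]
  have hsumγ : ∑ i, γ ^ (t i) = 0 := by
    simp_rw [htγ]; exact hsumη
  have hsubη : ∀ I : Finset (Fin N), I.Nonempty → ∑ i ∈ I, η i = 0 → I = Finset.univ := by
    intro I hI h0
    by_contra hIu
    refine hsub I hI hIu ?_
    have hz : ∑ i ∈ I, ζ i = ζ i0 * ∑ i ∈ I, η i := by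
      rw [Finset.mul_sum]
      refine Finset.sum_congr rfl fun i _ => ?_
      show ζ i = ζ i0 * (ζ i / ζ i0)
      rw [mul_comm, div_mul_cancel₀ _ (hne i0)]
    rw [hz, h0, mul_zero]
  have hmin : ∀ d : ℕ, 0 < d → d < M → (∀ i i', (η i / η i') ^ d = 1) → False := by
    intro d hd hdM h1
    have hle := hMmin d hd (fun i j => by
      have he : ζ i / ζ j = η i / η j := by
        rw [hη]
        rw [div_div_div_cancel_right₀]
        exact hne i0
      rw [he]; exact h1 i j)
    omega
  have hti0 : ∀ p : ℕ, p ∣ M → p ∣ t i0 := by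
    intro p hp
    have h1 : η i0 = 1 := div_self (hne i0)
    have hMt : M ∣ t i0 := (hγ.pow_eq_one_iff_dvd _).mp (by rw [htγ i0, h1])
    exact hp.trans hMt
  -- Part (a): squarefree
  have hsf : Squarefree M := by
    rw [Nat.squarefree_iff_prime_squarefree]
    intro p hp hpp
    have hpM : p ∣ M := (dvd_mul_right p p).trans hpp
    set m := M / p with hm
    have hMpm : M = p * m := (Nat.mul_div_cancel' hpM).symm
    have hmpos : 0 < m := by
      rcases Nat.eq_zero_or_pos m with h | h
      · rw [h, mul_zero] at hMpm; omega
      · exact h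
    have hpm : p ∣ m := by
      have h2 := hpp
      rw [hMpm] at h2
      exact (Nat.mul_dvd_mul_iff_left hp.pos).mp h2
    have hcop : ∀ j : ℕ, Nat.Coprime (1 + j * m) M := by
      intro j
      by_contra hc
      obtain ⟨r, hr, hr1, hrM⟩ := Nat.Prime.not_coprime_iff_dvd.mp hc
      have hrm : r ∣ m := by
        rw [hMpm] at hrM
        rcases (Nat.Prime.dvd_mul hr).mp hrM with h | h
        · rcases (Nat.prime_dvd_prime_iff_eq hr hp).mp h with rfl
          exact hpm
        · exact h
      have h1 : r ∣ 1 := by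
        have := Nat.dvd_sub hr1 (hrm.mul_left j)
        simpa using this
      exact Nat.Prime.one_lt hr |>.ne' (Nat.eq_one_of_dvd_one h1) |>.elim
    obtain ⟨w, hw⟩ : ∃ w : ℂ, w = γ ^ m := ⟨_, rfl⟩
    have hwp : IsPrimitiveRoot w p := hw ▸ IsPrimitiveRoot.pow hMpos hγ (hMpm.trans (Nat.mul_comm p m))
    have key : ∀ j : ℕ, ∑ i, η i * (w ^ t i) ^ j = 0 := by
      intro j
      have h1 := transfer hMpos hγ (hcop j) t hsumγ
      calc ∑ i, η i * (w ^ t i) ^ j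
          = ∑ i, γ ^ ((1 + j * m) * t i) := by
            refine Finset.sum_congr rfl fun i _ => ?_
            rw [← htγ i, hw, ← pow_mul, ← pow_mul, ← pow_add]
            congr 1
            ring
        _ = 0 := h1
    have h2 : ∀ i : Fin N, ∑ j ∈ Finset.range p, η i * (w ^ t i) ^ j
        = η i * (if p ∣ t i then (p : ℂ) else 0) := by
      intro i
      rw [← Finset.mul_sum]
      congr 1
      rw [← geom_aux hwp (t i)]
      exact Finset.sum_congr rfl fun j _ => by rw [pow_mul]
    have h3 : ∑ i, η i * (if p ∣ t i then (p : ℂ) else 0) = 0 := by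
      calc ∑ i, η i * (if p ∣ t i then (p : ℂ) else 0)
          = ∑ i, ∑ j ∈ Finset.range p, η i * (w ^ t i) ^ j :=
            Finset.sum_congr rfl fun i _ => (h2 i).symm
        _ = ∑ j ∈ Finset.range p, ∑ i, η i * (w ^ t i) ^ j := Finset.sum_comm
        _ = 0 := by simp [key]
    set I : Finset (Fin N) := Finset.univ.filter (fun i => p ∣ t i) with hIdef
    have h4 : (p : ℂ) * ∑ i ∈ I, η i = ∑ i, η i * (if p ∣ t i then (p : ℂ) else 0) := by
      rw [Finset.mul_sum, hIdef, Finset.sum_filter]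
      refine Finset.sum_congr rfl fun i _ => ?_
      split_ifs with h
      · ring
      · simp
    have hI0 : ∑ i ∈ I, η i = 0 := by
      rcases mul_eq_zero.mp (h4.trans h3) with h | h
      · exact absurd h (Nat.cast_ne_zero.mpr hp.pos.ne')
      · exact h
    have hi0I : i0 ∈ I := by
      rw [hIdef, Finset.mem_filter]
      exact ⟨Finset.mem_univ _, hti0 p hpM⟩
    have hIu : I = Finset.univ := hsubη I ⟨i0, hi0I⟩ hI0
    have hdvdall : ∀ i, p ∣ t i := by
      intro i
      have h5 : i ∈ I := hIu ▸ Finset.mem_univ i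
      rw [hIdef, Finset.mem_filter] at h5
      exact h5.2
    have hmM : m < M := by
      calc m = 1 * m := (one_mul m).symm
        _ < p * m := by
            exact Nat.mul_lt_mul_of_lt_of_le hp.one_lt (le_refl m) hmpos
        _ = M := hMpm.symm
    have hetam : ∀ i, η i ^ m = 1 := by
      intro i
      obtain ⟨c, hc⟩ := hdvdall i
      rw [← htγ i, ← pow_mul, hc]
      rw [show p * c * m = M * c by rw [hMpm]; ring, pow_mul, hγ.pow_eq_one, one_pow]
    exact hmin m hmpos hmM (fun i i' => by
      rw [div_pow, hetam i, hetam i', div_one])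
  refine ⟨hsf, ?_⟩
  -- Part (b): small primes
  intro q hq hqM
  by_contra hqN
  push_neg at hqN
  haveI : Fact q.Prime := ⟨hq⟩
  set m := M / q with hm
  have hMqm : M = q * m := (Nat.mul_div_cancel' hqM).symm
  have hmpos : 0 < m := by
    rcases Nat.eq_zero_or_pos m with h | h
    · rw [h, mul_zero] at hMqm; omega
    · exact h
  have hqm : ¬ q ∣ m := by
    intro hd
    have : IsUnit q := hsf q (by rw [hMqm]; exact mul_dvd_mul_left q hd)
    rw [Nat.isUnit_iff] at this
    exact hq.one_lt.ne' this
  obtain ⟨w, hw⟩ : ∃ w : ℂ, w = γ ^ m := ⟨_, rfl⟩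
  have hwq : IsPrimitiveRoot w q := hw ▸ IsPrimitiveRoot.pow hMpos hγ (hMqm.trans (Nat.mul_comm q m))
  have hwne : w ≠ 0 := hwq.ne_zero hq.pos.ne'
  have hmz : (m : ZMod q) ≠ 0 := fun h => hqm ((ZMod.natCast_eq_zero_iff m q).mp h)
  set sst := (-(m : ZMod q)⁻¹).val with hsst
  have hsstq : sst < q := ZMod.val_lt _
  have hdvd_iff : ∀ s : ℕ, s < q → (q ∣ 1 + s * m ↔ s = sst) := by
    intro s hs
    constructor
    · intro hdvd
      have h0 : ((1 + s * m : ℕ) : ZMod q) = 0 :=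
        (ZMod.natCast_eq_zero_iff _ q).mpr hdvd
      push_cast at h0
      have hsm : (s : ZMod q) * m = -1 := by linear_combination h0
      have hse : (s : ZMod q) = -(m : ZMod q)⁻¹ := by
        calc (s : ZMod q) = (s : ZMod q) * m * (m : ZMod q)⁻¹ := by
              rw [mul_assoc, mul_inv_cancel₀ hmz, mul_one]
          _ = -1 * (m : ZMod q)⁻¹ := by rw [hsm]
          _ = -(m : ZMod q)⁻¹ := by ring
      rw [hsst, ← hse, ZMod.val_cast_of_lt hs]
    · rintro rfl
      have h0 : ((1 + sst * m : ℕ) : ZMod q) = 0 := by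
        push_cast
        rw [hsst, ZMod.natCast_zmod_val]
        rw [neg_mul, inv_mul_cancel₀ hmz]
        ring
      exact (ZMod.natCast_eq_zero_iff _ q).mp h0
  have hcop : ∀ s : ℕ, s < q → s ≠ sst → Nat.Coprime (1 + s * m) M := by
    intro s hs hssst
    rw [hMqm]
    refine Nat.Coprime.mul_right ?_ ?_
    · rw [Nat.coprime_comm]
      exact (hq.coprime_iff_not_dvd).mpr (fun hd => hssst ((hdvd_iff s hs).mp hd))
    · exact (Nat.coprime_add_mul_right_left 1 m s).mpr (Nat.coprime_one_left m)
  set c : Fin N → ℕ := fun i => t i % q with hc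
  have hcq : ∀ i, c i < q := fun i => Nat.mod_lt _ hq.pos
  set V : ℕ → ℂ := fun j => ∑ i ∈ Finset.univ.filter (fun i => c i = j), η i with hV
  have hEq : ∀ s, s < q → s ≠ sst → ∑ j ∈ Finset.range q, V j * (w ^ j) ^ s = 0 := by
    intro s hs hssst
    have h1 := transfer hMpos hγ (hcop s hs hssst) t hsumγ
    have h2 : ∀ i : Fin N, γ ^ ((1 + s * m) * t i) = η i * (w ^ c i) ^ s := by
      intro i
      obtain ⟨d, r, hrq, hdr⟩ : ∃ d r, r < q ∧ t i = q * d + r :=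
        ⟨t i / q, t i % q, Nat.mod_lt _ hq.pos, (Nat.div_add_mod (t i) q).symm⟩
      have hcr : c i = r := by
        rw [hc]; simp only [hdr]; rw [Nat.mul_add_mod, Nat.mod_eq_of_lt hrq]
      have e1 : (1 + s * m) * t i = (t i + m * (c i * s)) + M * (s * d) := by
        rw [hcr, hdr, hMqm]; ring
      calc γ ^ ((1 + s * m) * t i)
          = γ ^ (t i + m * (c i * s)) * (γ ^ M) ^ (s * d) := by
            rw [← pow_mul, ← pow_add, e1]
        _ = γ ^ t i * γ ^ (m * (c i * s)) := by
            rw [hγ.pow_eq_one, one_pow, mul_one, pow_add]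
        _ = η i * (w ^ c i) ^ s := by
            rw [htγ i, hw, ← pow_mul, ← pow_mul]
    have h3 : ∑ i, η i * (w ^ c i) ^ s = 0 := by
      rw [← Finset.sum_congr rfl (fun i _ => h2 i)]
      exact h1
    rw [← h3, ← Finset.sum_fiberwise_of_maps_to
      (fun i _ => Finset.mem_range.mpr (hcq i)) (fun i => η i * (w ^ c i) ^ s)]
    refine Finset.sum_congr rfl fun j _ => ?_
    rw [hV, Finset.sum_mul]
    refine Finset.sum_congr rfl fun i hi => ?_
    rw [Finset.mem_filter] at hi
    rw [hi.2]
  set A : ℂ := ∑ j ∈ Finset.range q, V j * (w ^ j) ^ sst with hA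
  have hEq' : ∀ s ∈ Finset.range q,
      ∑ j ∈ Finset.range q, V j * (w ^ j) ^ s = if s = sst then A else 0 := by
    intro s hs
    by_cases h : s = sst
    · rw [if_pos h, h, hA]
    · rw [if_neg h]; exact hEq s (Finset.mem_range.mp hs) h
  have hDFT : ∀ j', j' < q → (q : ℂ) * V j' = w ^ ((q - j') * sst) * A := by
    intro j' hj'
    have key2 : ∑ s ∈ Finset.range q, w ^ ((q - j') * s)
        * (∑ j ∈ Finset.range q, V j * (w ^ j) ^ s) = w ^ ((q - j') * sst) * A := by
      rw [Finset.sum_congr rfl (fun s hs => by rw [hEq' s hs])]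
      simp only [mul_ite, mul_zero]
      rw [Finset.sum_ite_eq' (Finset.range q) sst (fun s => w ^ ((q - j') * s) * A)]
      rw [if_pos (Finset.mem_range.mpr hsstq)]
    rw [← key2]
    have hterm : ∀ j ∈ Finset.range q, ∑ s ∈ Finset.range q,
        w ^ ((q - j') * s) * (V j * (w ^ j) ^ s)
        = V j * (if q ∣ (q - j' + j) then (q : ℂ) else 0) := by
      intro j hj
      have hstep : ∀ s, w ^ ((q - j') * s) * (V j * (w ^ j) ^ s)
          = V j * w ^ ((q - j' + j) * s) := by
        intro s
        have e2 : (q - j' + j) * s = (q - j') * s + j * s := by ring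
        rw [e2, pow_add, ← pow_mul]
        ring
      simp_rw [hstep]
      rw [← Finset.mul_sum, geom_aux hwq (q - j' + j)]
    calc (q : ℂ) * V j'
        = ∑ j ∈ Finset.range q, V j * (if q ∣ (q - j' + j) then (q : ℂ) else 0) := by
          have hiff : ∀ j, j ∈ Finset.range q → ((q ∣ (q - j' + j)) ↔ j = j') := by
            intro j hj
            rw [Finset.mem_range] at hj
            constructor
            · intro hd
              have h1 : 0 < q - j' + j := by omega
              have h2 : q - j' + j < 2 * q := by omega
              have h3 : q ≤ q - j' + j := Nat.le_of_dvd h1 hd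
              have h4 : q ∣ (q - j' + j) - q := Nat.dvd_sub hd dvd_rfl
              have h5 : (q - j' + j) - q = 0 := by
                rcases Nat.eq_zero_or_pos ((q - j' + j) - q) with h | h
                · exact h
                · have := Nat.le_of_dvd h h4
                  omega
              omega
            · rintro rfl
              exact ⟨1, by omega⟩
          rw [Finset.sum_congr rfl (fun j hj => by
            rw [if_congr (hiff j hj) rfl rfl])]
          simp only [mul_ite, mul_zero]
          rw [Finset.sum_ite_eq' (Finset.range q) j' (fun j => V j * q)]
          rw [if_pos (Finset.mem_range.mpr hj'), mul_comm]
      _ = ∑ j ∈ Finset.range q, ∑ s ∈ Finset.range q,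
            w ^ ((q - j') * s) * (V j * (w ^ j) ^ s) :=
          (Finset.sum_congr rfl fun j hj => (hterm j hj).symm)
      _ = ∑ s ∈ Finset.range q, w ^ ((q - j') * s)
            * (∑ j ∈ Finset.range q, V j * (w ^ j) ^ s) := by
          rw [Finset.sum_comm]
          exact Finset.sum_congr rfl fun s _ => by rw [Finset.mul_sum]
  obtain ⟨j0, hj0q, hj0⟩ : ∃ j0, j0 < q ∧ ∀ i, c i ≠ j0 := by
    by_contra hcon
    push_neg at hcon
    have hsubset : Finset.range q ⊆ Finset.image c Finset.univ := by
      intro j hj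
      obtain ⟨i, hi⟩ := hcon j (Finset.mem_range.mp hj)
      exact Finset.mem_image.mpr ⟨i, Finset.mem_univ i, hi⟩
    have h1 := Finset.card_le_card hsubset
    have h2 := Finset.card_image_le (s := (Finset.univ : Finset (Fin N))) (f := c)
    rw [Finset.card_range] at h1
    rw [Finset.card_univ, Fintype.card_fin] at h2
    omega
  have hVj0 : V j0 = 0 := by
    rw [hV]
    have hemp : Finset.univ.filter (fun i => c i = j0) = ∅ :=
      Finset.filter_eq_empty_iff.mpr (fun i _ => hj0 i)
    simp only [hemp, Finset.sum_empty]
  have hA0 : A = 0 := by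
    have h1 := hDFT j0 hj0q
    rw [hVj0, mul_zero] at h1
    rcases mul_eq_zero.mp h1.symm with h | h
    · exact absurd h (pow_ne_zero _ hwne)
    · exact h
  have hVall : ∀ j, j < q → V j = 0 := by
    intro j hj
    have h1 := hDFT j hj
    rw [hA0, mul_zero] at h1
    rcases mul_eq_zero.mp h1 with h | h
    · exact absurd h (Nat.cast_ne_zero.mpr hq.pos.ne')
    · exact h
  set j1 := c i0 with hj1
  have hfil : Finset.univ.filter (fun i => c i = j1) = Finset.univ := by
    refine hsubη _ ⟨i0, ?_⟩ ?_
    · rw [Finset.mem_filter]; exact ⟨Finset.mem_univ _, rfl⟩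
    · have := hVall j1 (hcq i0)
      rw [hV] at this
      exact this
  have hall : ∀ i : Fin N, c i = j1 := by
    intro i
    have h5 : i ∈ Finset.univ.filter (fun i => c i = j1) := by
      rw [hfil]; exact Finset.mem_univ i
    rw [Finset.mem_filter] at h5
    exact h5.2
  have hpow : ∀ i : Fin N, η i ^ m = w ^ j1 := by
    intro i
    obtain ⟨d, hd⟩ : ∃ d, t i = q * d + j1 :=
      ⟨t i / q, by rw [← hall i, hc]; exact (Nat.div_add_mod (t i) q).symm⟩
    rw [← htγ i, ← pow_mul, hd, hw, ← pow_mul]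
    rw [show (q * d + j1) * m = M * d + m * j1 by rw [hMqm]; ring,
      pow_add, pow_mul, hγ.pow_eq_one, one_pow, one_mul, mul_comm]
  have hmM : m < M := by
    calc m = 1 * m := (one_mul m).symm
      _ < q * m := Nat.mul_lt_mul_of_lt_of_le hq.one_lt (le_refl m) hmpos
      _ = M := hMqm.symm
  exact hmin m hmpos hmM (fun i i' => by
    rw [div_pow, hpow i, hpow i', div_self (pow_ne_zero _ hwne)])
end
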